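/- arXiv:math/9805024 — 5 statements merged into one kernel-verified Lean document; each statement's English description precedes it below -/
import Mathlib

section
/- Let k ≥ 1 and ε ∈ {1,−1}. Let F ∈ ℝ^{(2k+1)×(2k+1)} be the matrix with F_{i,2k+2−i} = (−1)^{i+1}ε and all other entries 0, let p ∈ ℝ^{(2k+1)×(2k+1)} be the shift matrix (p_{i,i+1} = 1, all other entries 0) and P ∈ ℝ^{(2k+2)×(2k+2)} the shift matrix (P_{i,i+1} = 1). Let A = span_ℝ{p^{2j−1} : j = 1,…,k}, let S = {E(Σ_{j=1}^{k} a_j p^{2j−1}, α e_1) : a_1,…,a_k, α ∈ ℝ} ⊆ e(F) and M* = span_ℝ{P^{2j−1} : j = 1,…,k+1} ⊆ ℝ^{(2k+2)×(2k+2)}. Then M* ⊆ e(F), M* is a maximal abelian subalgebra of e(F), and every maximal abelian subalgebra M of e(F) satisfying {X : E(X,ξ) ∈ M for some ξ} = A and M ∩ T(2k+1) = ℝ·E(0,e_1) is conjugate, under conjugation by an element of the group E(F)-grp, either to S or to M*. -/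
open Matrix

/-- `o(K)`: real matrices `X` with `XK + KXᵀ = 0`. -/
def oK {n : ℕ} (K : Matrix (Fin n) (Fin n) ℝ) : Set (Matrix (Fin n) (Fin n) ℝ) :=
  {X | X * K + K * Xᵀ = 0}

/-- The `(n+1) × (n+1)` matrix `E(X, a)` with block form `[[X, a], [0, 0]]`. -/
def Emat {n : ℕ} (X : Matrix (Fin n) (Fin n) ℝ) (a : Fin n → ℝ) :
    Matrix (Fin (n + 1)) (Fin (n + 1)) ℝ :=
  Matrix.of fun i j =>
    if hi : i.val < n then
      if hj : j.val < n then X ⟨i.val, hi⟩ ⟨j.val, hj⟩ else a ⟨i.val, hi⟩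
    else 0

/-- The Lie algebra `e(K)`, as a set of `(n+1) × (n+1)` matrices. -/
def eK {n : ℕ} (K : Matrix (Fin n) (Fin n) ℝ) :
    Set (Matrix (Fin (n + 1)) (Fin (n + 1)) ℝ) :=
  {m | ∃ X ∈ oK K, ∃ a : Fin n → ℝ, m = Emat X a}

/-- `M` is a maximal abelian subalgebra of the matrix Lie algebra (set) `L`:
it is a linear subspace contained in `L`, its elements pairwise commute, and
every element of `L` commuting with all of `M` belongs to `M`. -/
def IsMASA {κ : Type*} [Fintype κ] (L M : Set (Matrix κ κ ℝ)) : Prop :=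
  M ⊆ L ∧
  (∀ X ∈ M, ∀ Y ∈ M, X * Y = Y * X) ∧
  (0 : Matrix κ κ ℝ) ∈ M ∧
  (∀ X ∈ M, ∀ Y ∈ M, X + Y ∈ M) ∧
  (∀ (c : ℝ), ∀ X ∈ M, c • X ∈ M) ∧
  (∀ Y ∈ L, (∀ X ∈ M, Y * X = X * Y) → Y ∈ M)

/-- The group element of `E(K)` with block form `[[G, a], [0, 1]]`. -/
def Ggrp {n : ℕ} (G : Matrix (Fin n) (Fin n) ℝ) (a : Fin n → ℝ) :
    Matrix (Fin (n + 1)) (Fin (n + 1)) ℝ :=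
  Matrix.of fun i j =>
    if hi : i.val < n then
      if hj : j.val < n then G ⟨i.val, hi⟩ ⟨j.val, hj⟩ else a ⟨i.val, hi⟩
    else
      if j.val < n then 0 else 1

/-- `M` is conjugate to `S` by an element `[[G, a], [0, 1]]` of the group `E(K)`. -/
def ConjTo {n : ℕ} (K : Matrix (Fin n) (Fin n) ℝ)
    (M S : Set (Matrix (Fin (n + 1)) (Fin (n + 1)) ℝ)) : Prop :=
  ∃ (G : Matrix (Fin n) (Fin n) ℝ) (a : Fin n → ℝ),
    G * K * Gᵀ = K ∧
    M = (fun m => Ggrp G a * m * (Ggrp G a)⁻¹) '' S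

/-- The antidiagonal metric `F` with `F_{i,2k+2-i} = (-1)^{i+1} ε` (1-indexed). -/
def Fmat (k : ℕ) (ε : ℝ) : Matrix (Fin (2 * k + 1)) (Fin (2 * k + 1)) ℝ :=
  Matrix.of fun i j => if i.val + j.val = 2 * k then (-1) ^ i.val * ε else 0

/-- The nilpotent shift matrix `p`, `p_{i,i+1} = 1`. -/
def shiftMat (n : ℕ) : Matrix (Fin n) (Fin n) ℝ :=
  Matrix.of fun i j => if j.val = i.val + 1 then 1 else 0

/-- The first standard basis vector `e₁`. -/
def e1 (n : ℕ) : Fin n → ℝ := fun i => if i.val = 0 then 1 else 0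

/-- `A = span{p^{2j-1} : j = 1, …, k}`. -/
def Aset (k : ℕ) : Set (Matrix (Fin (2 * k + 1)) (Fin (2 * k + 1)) ℝ) :=
  {X | ∃ c : Fin k → ℝ, X = ∑ j : Fin k, c j • shiftMat (2 * k + 1) ^ (2 * j.val + 1)}

/-- The splitting MASA `S = {E(Σ aⱼ p^{2j-1}, α e₁)}`. -/
def Sset (k : ℕ) : Set (Matrix (Fin (2 * k + 1 + 1)) (Fin (2 * k + 1 + 1)) ℝ) :=
  {m | ∃ (c : Fin k → ℝ) (α : ℝ),
    m = Emat (∑ j : Fin k, c j • shiftMat (2 * k + 1) ^ (2 * j.val + 1))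
      (α • e1 (2 * k + 1))}

/-- The nonsplitting MASA `M* = span{P^{2j-1} : j = 1, …, k+1}`. -/
def Mstar (k : ℕ) : Set (Matrix (Fin (2 * k + 1 + 1)) (Fin (2 * k + 1 + 1)) ℝ) :=
  {m | ∃ c : Fin (k + 1) → ℝ,
    m = ∑ j : Fin (k + 1), c j • shiftMat (2 * k + 1 + 1) ^ (2 * j.val + 1)}

/-!
A matrix commuting with the shift `P` is a polynomial in `P`, and for an element of `e(F)` the
relation `XF + FXᵀ = 0` kills its even coefficients; so the centralizer of `P` in `e(F)` is `M*`,
which is therefore a MASA.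

For the classification, the hypothesis on the projection puts some `E(p, v)` into `M`, and
commuting with it fixes the translation part of every other element modulo `ℝ e₁`; hence
`M = {E(Σ cⱼ p^{2j-1}, Σ cⱼ p^{2j-2} v + α e₁)}`. Conjugating by `[[D, a], [0, 1]]` with
`D = diag(t s^{k-i})`, which preserves `F` when `t² = 1`, replaces `v` by `s⁻¹ D v - p a`. As `p`
maps onto the vectors with vanishing last coordinate, `v` can be moved to `0` (giving `S`) when
`v_{2k+1} = 0`, and otherwise, choosing `t s^{-(k+1)} = v_{2k+1}`, to `e_{2k+1}` (giving `M*`).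
-/

variable {n : ℕ}

section BlockMatrices

lemma Emat_apply (X : Matrix (Fin n) (Fin n) ℝ) (a : Fin n → ℝ) (i j : Fin (n + 1)) :
    Emat X a i j =
      if hi : i.val < n then (if hj : j.val < n then X ⟨i, hi⟩ ⟨j, hj⟩ else a ⟨i, hi⟩) else 0 :=
  rfl

lemma Ggrp_apply (G : Matrix (Fin n) (Fin n) ℝ) (a : Fin n → ℝ) (i j : Fin (n + 1)) :
    Ggrp G a i j =
      if hi : i.val < n then (if hj : j.val < n then G ⟨i, hi⟩ ⟨j, hj⟩ else a ⟨i, hi⟩)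
      else (if j.val < n then 0 else 1) :=
  rfl

lemma Emat_castSucc_castSucc (X : Matrix (Fin n) (Fin n) ℝ) (a : Fin n → ℝ) (i j : Fin n) :
    Emat X a i.castSucc j.castSucc = X i j := by
  simp [Emat_apply]

lemma Emat_mul_Emat (X Y : Matrix (Fin n) (Fin n) ℝ) (a b : Fin n → ℝ) :
    Emat X a * Emat Y b = Emat (X * Y) (X *ᵥ b) := by
  ext i j
  rw [mul_apply, Fin.sum_univ_castSucc]
  induction i using Fin.lastCases with
  | last => simp [Emat_apply]
  | cast i =>
    induction j using Fin.lastCases with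
    | last => simp [Emat_apply, mulVec, dotProduct]
    | cast j => simp [Emat_apply, mul_apply]

lemma Ggrp_mul_Emat (G X : Matrix (Fin n) (Fin n) ℝ) (a ξ : Fin n → ℝ) :
    Ggrp G a * Emat X ξ = Emat (G * X) (G *ᵥ ξ) := by
  ext i j
  rw [mul_apply, Fin.sum_univ_castSucc]
  induction i using Fin.lastCases with
  | last => simp [Emat_apply, Ggrp_apply]
  | cast i =>
    induction j using Fin.lastCases with
    | last => simp [Emat_apply, Ggrp_apply, mulVec, dotProduct]
    | cast j => simp [Emat_apply, Ggrp_apply, mul_apply]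

lemma Emat_mul_Ggrp (X G : Matrix (Fin n) (Fin n) ℝ) (ξ a : Fin n → ℝ) :
    Emat X ξ * Ggrp G a = Emat (X * G) (X *ᵥ a + ξ) := by
  ext i j
  rw [mul_apply, Fin.sum_univ_castSucc]
  induction i using Fin.lastCases with
  | last => simp [Emat_apply, Ggrp_apply]
  | cast i =>
    induction j using Fin.lastCases with
    | last => simp [Emat_apply, Ggrp_apply, mulVec, dotProduct]
    | cast j => simp [Emat_apply, Ggrp_apply, mul_apply]

lemma Ggrp_mul_Ggrp (G H : Matrix (Fin n) (Fin n) ℝ) (a b : Fin n → ℝ) :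
    Ggrp G a * Ggrp H b = Ggrp (G * H) (G *ᵥ b + a) := by
  ext i j
  rw [mul_apply, Fin.sum_univ_castSucc]
  induction i using Fin.lastCases with
  | last => induction j using Fin.lastCases <;> simp [Ggrp_apply]
  | cast i =>
    induction j using Fin.lastCases with
    | last => simp [Ggrp_apply, mulVec, dotProduct]
    | cast j => simp [Ggrp_apply, mul_apply]

lemma Ggrp_one_zero : Ggrp (1 : Matrix (Fin n) (Fin n) ℝ) 0 = 1 := by
  ext i j
  induction i using Fin.lastCases <;> induction j using Fin.lastCases <;>
    simp [Ggrp_apply, one_apply, Fin.ext_iff, Fin.val_last, Nat.ne_of_lt, Nat.ne_of_gt]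

lemma Ggrp_inv {G H : Matrix (Fin n) (Fin n) ℝ} (hGH : G * H = 1) (a : Fin n → ℝ) :
    (Ggrp G a)⁻¹ = Ggrp H (-(H *ᵥ a)) := by
  apply inv_eq_right_inv
  rw [Ggrp_mul_Ggrp, hGH, mulVec_neg, mulVec_mulVec, hGH, one_mulVec, neg_add_cancel,
    Ggrp_one_zero]

lemma Ggrp_conj_Emat {G H : Matrix (Fin n) (Fin n) ℝ} (hGH : G * H = 1) (a : Fin n → ℝ)
    (X : Matrix (Fin n) (Fin n) ℝ) (ξ : Fin n → ℝ) :
    Ggrp G a * Emat X ξ * (Ggrp G a)⁻¹ = Emat (G * X * H) (G *ᵥ ξ - (G * X * H) *ᵥ a) := by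
  rw [Ggrp_inv hGH, Ggrp_mul_Emat, Emat_mul_Ggrp, mulVec_neg, mulVec_mulVec, neg_add_eq_sub]

lemma Emat_inj {X Y : Matrix (Fin n) (Fin n) ℝ} {a b : Fin n → ℝ} :
    Emat X a = Emat Y b ↔ X = Y ∧ a = b := by
  refine ⟨fun h => ⟨ext fun i j => ?_, funext fun i => ?_⟩, fun ⟨hX, ha⟩ => hX ▸ ha ▸ rfl⟩
  · simpa [Emat_apply] using congrFun₂ h i.castSucc j.castSucc
  · simpa [Emat_apply] using congrFun₂ h i.castSucc (Fin.last n)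

lemma Emat_add (X Y : Matrix (Fin n) (Fin n) ℝ) (a b : Fin n → ℝ) :
    Emat X a + Emat Y b = Emat (X + Y) (a + b) := by
  ext i j
  by_cases hi : i.val < n <;> by_cases hj : j.val < n <;> simp [Emat_apply, hi, hj]

lemma Emat_smul (c : ℝ) (X : Matrix (Fin n) (Fin n) ℝ) (a : Fin n → ℝ) :
    c • Emat X a = Emat (c • X) (c • a) := by
  ext i j
  by_cases hi : i.val < n <;> by_cases hj : j.val < n <;> simp [Emat_apply, hi, hj]

lemma Emat_sum {ι : Type*} (s : Finset ι) (X : ι → Matrix (Fin n) (Fin n) ℝ)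
    (a : ι → Fin n → ℝ) : ∑ j ∈ s, Emat (X j) (a j) = Emat (∑ j ∈ s, X j) (∑ j ∈ s, a j) := by
  induction s using Finset.cons_induction with
  | empty =>
    ext i j
    by_cases hi : i.val < n <;> by_cases hj : j.val < n <;> simp [Emat_apply, hi, hj]
  | cons b s hb ih => rw [Finset.sum_cons, Finset.sum_cons, Finset.sum_cons, ih, Emat_add]

end BlockMatrices

section ShiftMatrix

lemma sum_ite_val_eq {M : Type*} [AddCommMonoid M] (t : ℕ) (f : Fin n → M) :
    (∑ l : Fin n, if l.val = t then f l else 0) = if h : t < n then f ⟨t, h⟩ else 0 := by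
  split_ifs with h
  · rw [Finset.sum_eq_single ⟨t, h⟩ (fun l _ hl => if_neg fun hc => hl (Fin.ext hc))
      (by simp)]
    simp
  · exact Finset.sum_eq_zero fun l _ => if_neg fun hc : l.val = t => h (hc ▸ l.isLt)

lemma shiftMat_pow_apply (m : ℕ) (i j : Fin n) :
    (shiftMat n ^ m) i j = if j.val = i.val + m then 1 else 0 := by
  induction m generalizing j with
  | zero => simp [one_apply, Fin.ext_iff, eq_comm]
  | succ m ih =>
    have hterm : ∀ l : Fin n, (shiftMat n ^ m) i l * shiftMat n l j =
        if l.val = i.val + m then (if j.val = i.val + m + 1 then 1 else 0) else 0 := by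
      intro l
      rw [ih]
      simp only [shiftMat, of_apply]
      split_ifs <;> first | omega | simp
    rw [pow_succ, mul_apply, Finset.sum_congr rfl fun l _ => hterm l, sum_ite_val_eq]
    split_ifs <;> first | rfl | omega

lemma shiftMat_pow_mulVec_apply (m : ℕ) (v : Fin n → ℝ) (i : Fin n) :
    (shiftMat n ^ m *ᵥ v) i = if h : i.val + m < n then v ⟨i.val + m, h⟩ else 0 := by
  simp only [mulVec, dotProduct, shiftMat_pow_apply, ite_mul, one_mul, zero_mul]
  exact sum_ite_val_eq _ v

lemma shiftMat_pow_mul_apply (m : ℕ) (Y : Matrix (Fin n) (Fin n) ℝ) (i j : Fin n) :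
    (shiftMat n ^ m * Y) i j = if h : i.val + m < n then Y ⟨i.val + m, h⟩ j else 0 :=
  shiftMat_pow_mulVec_apply m (fun l => Y l j) i

lemma mul_shiftMat_pow_apply (m : ℕ) (Y : Matrix (Fin n) (Fin n) ℝ) (i j : Fin n) :
    (Y * shiftMat n ^ m) i j = if h : m ≤ j.val then Y i ⟨j.val - m, by omega⟩ else 0 := by
  have hterm : ∀ l : Fin n, Y i l * (shiftMat n ^ m) l j =
      if l.val = j.val - m then (if m ≤ j.val then Y i l else 0) else 0 := by
    intro l
    rw [shiftMat_pow_apply]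
    split_ifs <;> first | omega | simp
  rw [mul_apply, Finset.sum_congr rfl fun l _ => hterm l, sum_ite_val_eq, dif_pos (by omega)]
  split_ifs <;> rfl

lemma shiftMat_pow_eq_zero {m : ℕ} (h : n ≤ m) : shiftMat n ^ m = 0 := by
  ext i j
  rw [shiftMat_pow_apply, if_neg (by omega), Matrix.zero_apply]

def elast (n : ℕ) : Fin n → ℝ := fun i => if i.val + 1 = n then 1 else 0

lemma shiftMat_pow_mulVec_elast (m : ℕ) (i : Fin n) :
    (shiftMat n ^ m *ᵥ elast n) i = if i.val + m + 1 = n then 1 else 0 := by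
  rw [shiftMat_pow_mulVec_apply]
  simp only [elast]
  split_ifs <;> first | rfl | omega

lemma shiftMat_pow_mulVec_elast_eq_e1 : shiftMat (n + 1) ^ n *ᵥ elast (n + 1) = e1 (n + 1) := by
  funext i
  rw [shiftMat_pow_mulVec_elast, e1]
  congr 1
  apply propext
  omega

lemma shiftMat_succ_pow_succ (m : ℕ) :
    shiftMat (n + 1) ^ (m + 1) = Emat (shiftMat n ^ (m + 1)) (shiftMat n ^ m *ᵥ elast n) := by
  ext i j
  rw [shiftMat_pow_apply, Emat_apply]
  by_cases hi : i.val < n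
  · by_cases hj : j.val < n
    · rw [dif_pos hi, dif_pos hj, shiftMat_pow_apply]
    · rw [dif_pos hi, dif_neg hj, shiftMat_pow_mulVec_elast]
      dsimp only
      split_ifs <;> first | rfl | omega
  · rw [dif_neg hi, if_neg (by omega)]

lemma eq_smul_e1_of_shiftMat_mulVec_eq_zero {u : Fin (n + 1) → ℝ}
    (h : shiftMat (n + 1) *ᵥ u = 0) : u = u 0 • e1 (n + 1) := by
  funext i
  rcases Fin.eq_zero_or_eq_succ i with rfl | ⟨j, rfl⟩
  · simp [e1]
  · have hj := congrFun h j.castSucc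
    rw [← pow_one (shiftMat _), shiftMat_pow_mulVec_apply, dif_pos (by simp)] at hj
    simpa [e1, Fin.succ] using hj

lemma exists_shiftMat_mulVec_eq {w : Fin (n + 1) → ℝ} (hw : w (Fin.last n) = 0) :
    ∃ a, shiftMat (n + 1) *ᵥ a = w := by
  refine ⟨Fin.cons 0 fun j => w j.castSucc, funext fun i => ?_⟩
  rw [← pow_one (shiftMat _), shiftMat_pow_mulVec_apply]
  split_ifs with h
  · exact Fin.cons_succ (α := fun _ => ℝ) _ _ ⟨i.val, by omega⟩
  · rw [show i = Fin.last n from Fin.ext (by simp only [Fin.val_last]; omega), hw]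

lemma apply_eq_of_commute_shiftMat {Y : Matrix (Fin (n + 1)) (Fin (n + 1)) ℝ}
    (h : Commute Y (shiftMat (n + 1))) (i j : Fin (n + 1)) :
    Y i j = if hij : i.val ≤ j.val then Y 0 ⟨j.val - i.val, by omega⟩ else 0 := by
  have key := congrFun₂ (h.pow_right i.val).eq 0 j
  rw [mul_shiftMat_pow_apply, shiftMat_pow_mul_apply,
    dif_pos (show (0 : Fin (n + 1)).val + i.val < n + 1 by simpa using i.isLt)] at key
  rw [key]
  congr 1
  ext
  simp

end ShiftMatrix

section Metric

variable {k : ℕ} {ε : ℝ}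

lemma Fmat_apply_eq_ite (i j : Fin (2 * k + 1)) :
    Fmat k ε i j = if i = Fin.rev j then (-1) ^ i.val * ε else 0 := by
  simp only [Fmat, of_apply, Fin.ext_iff, Fin.val_rev]
  congr 1
  apply propext
  omega

lemma mul_Fmat_apply (M : Matrix (Fin (2 * k + 1)) (Fin (2 * k + 1)) ℝ) (i j : Fin (2 * k + 1)) :
    (M * Fmat k ε) i j = M i (Fin.rev j) * ((-1) ^ (2 * k - j.val) * ε) := by
  simp only [mul_apply, Fmat_apply_eq_ite, mul_ite, mul_zero, Finset.sum_ite_eq',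
    Finset.mem_univ, if_true, Fin.val_rev]
  congr 3
  omega

lemma Fmat_mul_apply (M : Matrix (Fin (2 * k + 1)) (Fin (2 * k + 1)) ℝ) (i j : Fin (2 * k + 1)) :
    (Fmat k ε * M) i j = (-1) ^ i.val * ε * M (Fin.rev i) j := by
  rw [mul_apply, Finset.sum_eq_single (Fin.rev i) (fun l _ hl => ?_) (by simp),
    Fmat_apply_eq_ite, if_pos (Fin.rev_rev i).symm]
  rw [Fmat_apply_eq_ite, if_neg fun h => hl (by rw [h, Fin.rev_rev]), zero_mul]

lemma shiftMat_mul_Fmat :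
    shiftMat (2 * k + 1) * Fmat k ε = -(Fmat k ε * (shiftMat (2 * k + 1))ᵀ) := by
  ext i j
  rw [neg_apply, mul_Fmat_apply, Fmat_mul_apply, transpose_apply]
  simp only [shiftMat, of_apply, Fin.val_rev]
  split_ifs
  · rw [show 2 * k - j.val = i.val + 1 by omega, pow_succ]
    ring
  all_goals first | omega | simp

lemma shiftMat_pow_mul_Fmat (d : ℕ) :
    shiftMat (2 * k + 1) ^ d * Fmat k ε =
      (-1 : ℝ) ^ d • (Fmat k ε * (shiftMat (2 * k + 1) ^ d)ᵀ) := by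
  induction d with
  | zero => simp
  | succ d ih =>
    conv_lhs => rw [pow_succ, mul_assoc, shiftMat_mul_Fmat, mul_neg, ← mul_assoc, ih]
    rw [pow_succ' (shiftMat _), transpose_mul, smul_mul_assoc, mul_assoc, pow_succ, mul_neg_one,
      neg_smul]

lemma apply_rev_last_of_mem_oK (hε : ε ≠ 0) {X : Matrix (Fin (2 * k + 1)) (Fin (2 * k + 1)) ℝ}
    (hX : X ∈ oK (Fmat k ε)) (d : Fin (2 * k + 1)) :
    X (Fin.rev d) (Fin.last (2 * k)) = -((-1) ^ d.val * X 0 d) := by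
  have h := congrFun₂ (show X * Fmat k ε + Fmat k ε * Xᵀ = 0 from hX) 0 (Fin.rev d)
  rw [Matrix.add_apply, mul_Fmat_apply, Fmat_mul_apply, Fin.rev_rev, transpose_apply, Fin.rev_zero,
    Fin.val_rev, show 2 * k - (2 * k + 1 - (d.val + 1)) = d.val by omega, Matrix.zero_apply] at h
  have h' : ε * ((-1) ^ d.val * X 0 d + X (Fin.rev d) (Fin.last (2 * k))) = 0 := by
    simp only [Fin.val_zero, pow_zero, one_mul] at h
    linear_combination h
  linarith [(mul_eq_zero.mp h').resolve_left hε]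

end Metric

section Family

variable (k : ℕ)

noncomputable def oddPoly (c : Fin k → ℝ) : Matrix (Fin (2 * k + 1)) (Fin (2 * k + 1)) ℝ :=
  ∑ j : Fin k, c j • shiftMat (2 * k + 1) ^ (2 * j.val + 1)

noncomputable def evenPoly (c : Fin k → ℝ) : Matrix (Fin (2 * k + 1)) (Fin (2 * k + 1)) ℝ :=
  ∑ j : Fin k, c j • shiftMat (2 * k + 1) ^ (2 * j.val)

/-- The candidates for the MASA `M`: `S` is the case `v = 0` and `M*` the case `v = e_{2k+1}`. -/
def twistedS (v : Fin (2 * k + 1) → ℝ) :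
    Set (Matrix (Fin (2 * k + 1 + 1)) (Fin (2 * k + 1 + 1)) ℝ) :=
  {m | ∃ (c : Fin k → ℝ) (α : ℝ),
    m = Emat (oddPoly k c) (evenPoly k c *ᵥ v + α • e1 (2 * k + 1))}

variable {k}

lemma shiftMat_mul_evenPoly (c : Fin k → ℝ) :
    shiftMat (2 * k + 1) * evenPoly k c = oddPoly k c := by
  simp_rw [evenPoly, oddPoly, Finset.mul_sum, mul_smul_comm, ← pow_succ']

lemma evenPoly_mul_shiftMat (c : Fin k → ℝ) :
    evenPoly k c * shiftMat (2 * k + 1) = oddPoly k c := by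
  simp_rw [evenPoly, oddPoly, Finset.sum_mul, smul_mul_assoc, ← pow_succ]

lemma Sset_eq_twistedS : Sset k = twistedS k 0 := by
  simp only [Sset, twistedS, oddPoly, mulVec_zero, zero_add]

lemma sum_smul_shiftMat_pow_odd (c : Fin (k + 1) → ℝ) :
    ∑ j, c j • shiftMat (2 * k + 1 + 1) ^ (2 * j.val + 1) =
      Emat (oddPoly k (c ∘ Fin.castSucc))
        (evenPoly k (c ∘ Fin.castSucc) *ᵥ elast (2 * k + 1) + c (Fin.last k) • e1 (2 * k + 1)) := by
  simp_rw [shiftMat_succ_pow_succ (n := 2 * k + 1), Emat_smul, Emat_sum, Fin.sum_univ_castSucc,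
    Fin.val_last, shiftMat_pow_eq_zero (le_refl (2 * k + 1)), smul_zero, add_zero]
  simp_rw [oddPoly, evenPoly, sum_mulVec, smul_mulVec, Fin.val_castSucc, Function.comp_apply,
    shiftMat_pow_mulVec_elast_eq_e1]

lemma Mstar_eq_twistedS : Mstar k = twistedS k (elast (2 * k + 1)) := by
  ext m
  constructor
  · rintro ⟨c, rfl⟩
    exact ⟨c ∘ Fin.castSucc, c (Fin.last k), sum_smul_shiftMat_pow_odd c⟩
  · rintro ⟨c, α, rfl⟩
    have hc : (Fin.snoc c α : Fin (k + 1) → ℝ) ∘ Fin.castSucc = c :=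
      funext fun j => Fin.snoc_castSucc (α := fun _ => ℝ) ..
    exact ⟨Fin.snoc c α, by rw [sum_smul_shiftMat_pow_odd, Fin.snoc_last, hc]⟩

lemma oddPoly_mem_oK (ε : ℝ) (c : Fin k → ℝ) : oddPoly k c ∈ oK (Fmat k ε) := by
  show oddPoly k c * Fmat k ε + Fmat k ε * (oddPoly k c)ᵀ = 0
  have hodd : ∀ j : ℕ, (-1 : ℝ) ^ (2 * j + 1) = -1 := fun j => Odd.neg_one_pow ⟨j, rfl⟩
  simp_rw [oddPoly, Finset.sum_mul, transpose_sum, Finset.mul_sum, ← Finset.sum_add_distrib,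
    smul_mul_assoc, shiftMat_pow_mul_Fmat, hodd,
    transpose_smul, mul_smul_comm, neg_one_smul, smul_neg, neg_add_cancel, Finset.sum_const_zero]

lemma twistedS_subset_eK (ε : ℝ) (v : Fin (2 * k + 1) → ℝ) : twistedS k v ⊆ eK (Fmat k ε) := by
  rintro _ ⟨c, α, rfl⟩
  exact ⟨oddPoly k c, oddPoly_mem_oK ε c, _, rfl⟩

lemma Mstar_subset_eK (ε : ℝ) : Mstar k ⊆ eK (Fmat k ε) :=
  Mstar_eq_twistedS (k := k) ▸ twistedS_subset_eK ε _

end Family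

section Maximality

variable {k : ℕ} {ε : ℝ}

lemma sum_smul_shiftMat_pow_odd_apply_zero (c : Fin (k + 1) → ℝ) (d : Fin (2 * k + 1 + 1)) :
    (∑ j, c j • shiftMat (2 * k + 1 + 1) ^ (2 * j.val + 1)) 0 d =
      if d.val % 2 = 1 then c ⟨d.val / 2, by omega⟩ else 0 := by
  have hterm : ∀ j : Fin (k + 1), (c j • shiftMat (2 * k + 1 + 1) ^ (2 * j.val + 1)) 0 d =
      if j.val = d.val / 2 then (if d.val % 2 = 1 then c j else 0) else 0 := by
    intro j
    rw [Matrix.smul_apply, shiftMat_pow_apply, Fin.val_zero, smul_eq_mul]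
    split_ifs <;> first | omega | simp
  rw [Matrix.sum_apply, Finset.sum_congr rfl fun j _ => hterm j, sum_ite_val_eq,
    dif_pos (by omega)]

lemma apply_zero_eq_zero_of_even (hε : ε ≠ 0)
    {Y : Matrix (Fin (2 * k + 1 + 1)) (Fin (2 * k + 1 + 1)) ℝ} (hY : Y ∈ eK (Fmat k ε))
    (h : Commute Y (shiftMat (2 * k + 1 + 1)))
    (d : Fin (2 * k + 1 + 1)) (hd : d.val % 2 = 0) : Y 0 d = 0 := by
  obtain ⟨X, hX, a, rfl⟩ := hY
  set d' : Fin (2 * k + 1) := ⟨d.val, by omega⟩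
  have hsym := apply_rev_last_of_mem_oK hε hX d'
  have hlast : X (Fin.rev d') (Fin.last (2 * k)) = Emat X a 0 d := by
    rw [← Emat_castSucc_castSucc X a, apply_eq_of_commute_shiftMat h,
      dif_pos (by simp [d', Fin.val_rev])]
    congr 1
    ext
    simp [d', Fin.val_rev]
    omega
  have hfirst : X 0 d' = Emat X a 0 d := by
    rw [← Emat_castSucc_castSucc X a]
    rfl
  rw [hlast, hfirst, Even.neg_one_pow (Nat.even_iff.mpr hd)] at hsym
  linarith

lemma mem_Mstar_of_commute_shiftMat (hε : ε ≠ 0)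
    {Y : Matrix (Fin (2 * k + 1 + 1)) (Fin (2 * k + 1 + 1)) ℝ} (hY : Y ∈ eK (Fmat k ε))
    (h : Commute Y (shiftMat (2 * k + 1 + 1))) : Y ∈ Mstar k := by
  set c : Fin (k + 1) → ℝ := fun j => Y 0 ⟨2 * j.val + 1, by omega⟩
  refine ⟨c, sub_eq_zero.mp ?_⟩
  have hZ : Commute (Y - ∑ j, c j • shiftMat (2 * k + 1 + 1) ^ (2 * j.val + 1))
      (shiftMat (2 * k + 1 + 1)) :=
    h.sub_left (Commute.sum_left _ _ _ fun j _ => ((Commute.self_pow _ _).symm.smul_left _))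
  have hrow : ∀ d, (Y - ∑ j, c j • shiftMat (2 * k + 1 + 1) ^ (2 * j.val + 1)) 0 d = 0 := by
    intro d
    rw [Matrix.sub_apply, sum_smul_shiftMat_pow_odd_apply_zero, sub_eq_zero]
    split_ifs with hodd
    · exact congrArg (Y 0) (Fin.ext (by simp only; omega))
    · exact apply_zero_eq_zero_of_even hε hY h d (by omega)
  ext i j
  rw [apply_eq_of_commute_shiftMat hZ]
  split_ifs <;> simp [hrow]

lemma Mstar_isMASA (hε : ε ≠ 0) : IsMASA (eK (Fmat k ε)) (Mstar k) := by
  refine ⟨Mstar_subset_eK ε, ?_, ⟨0, by simp⟩, ?_, ?_, ?_⟩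
  · rintro _ ⟨c, rfl⟩ _ ⟨c', rfl⟩
    exact (Commute.sum_left _ _ _ fun i _ => Commute.sum_right _ _ _ fun j _ =>
      ((Commute.pow_pow_self _ _ _).smul_left _).smul_right _).eq
  · rintro _ ⟨c, rfl⟩ _ ⟨c', rfl⟩
    exact ⟨c + c', by simp only [Pi.add_apply, add_smul, Finset.sum_add_distrib]⟩
  · rintro r _ ⟨c, rfl⟩
    exact ⟨r • c, by simp only [Finset.smul_sum, Pi.smul_apply, smul_smul, smul_eq_mul]⟩
  · intro Y hY hcomm
    refine mem_Mstar_of_commute_shiftMat hε hY (hcomm _ ⟨Pi.single 0 1, ?_⟩)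
    simp [Pi.single_apply]

end Maximality

section Structure

variable {k : ℕ}

lemma oddPoly_single_zero (hk : 0 < k) :
    oddPoly k (Pi.single ⟨0, hk⟩ 1) = shiftMat (2 * k + 1) := by
  simp [oddPoly, Pi.single_apply]

lemma exists_eq_evenPoly_mulVec_add_of_commute {c : Fin k → ℝ} {ξ v : Fin (2 * k + 1) → ℝ}
    (h : Emat (oddPoly k c) ξ * Emat (shiftMat (2 * k + 1)) v =
      Emat (shiftMat (2 * k + 1)) v * Emat (oddPoly k c) ξ) :
    ∃ α : ℝ, ξ = evenPoly k c *ᵥ v + α • e1 (2 * k + 1) := by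
  rw [Emat_mul_Emat, Emat_mul_Emat] at h
  have hker : shiftMat (2 * k + 1) *ᵥ (ξ - evenPoly k c *ᵥ v) = 0 := by
    rw [mulVec_sub, mulVec_mulVec, shiftMat_mul_evenPoly, (Emat_inj.mp h).2, sub_self]
  exact ⟨_, by rw [← eq_smul_e1_of_shiftMat_mulVec_eq_zero hker, add_sub_cancel]⟩

lemma eq_twistedS_of_isMASA (hk : 1 ≤ k) {ε : ℝ}
    {M : Set (Matrix (Fin (2 * k + 1 + 1)) (Fin (2 * k + 1 + 1)) ℝ)}
    (hM : IsMASA (eK (Fmat k ε)) M)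
    (hproj : {X | ∃ ξ : Fin (2 * k + 1) → ℝ, Emat X ξ ∈ M} = Aset k)
    (htr : M ∩ {m | ∃ a : Fin (2 * k + 1) → ℝ, m = Emat 0 a} =
      {m | ∃ c : ℝ, m = Emat 0 (c • e1 (2 * k + 1))}) :
    ∃ v, M = twistedS k v := by
  obtain ⟨hsub, hcomm, -, hadd, hsmul, -⟩ := hM
  have hA : ∀ c, ∃ ξ, Emat (oddPoly k c) ξ ∈ M := fun c =>
    (Set.ext_iff.mp hproj _).mpr ⟨c, rfl⟩
  have he1 : Emat 0 (e1 (2 * k + 1)) ∈ M :=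
    ((Set.ext_iff.mp htr _).mpr ⟨1, by rw [one_smul]⟩).1
  obtain ⟨v, hv⟩ := hA (Pi.single ⟨0, hk⟩ 1)
  rw [oddPoly_single_zero] at hv
  have hvec : ∀ c ξ, Emat (oddPoly k c) ξ ∈ M → ∃ α : ℝ, ξ = evenPoly k c *ᵥ v + α • e1 _ :=
    fun c ξ hξ => exists_eq_evenPoly_mulVec_add_of_commute (hcomm _ hξ _ hv)
  refine ⟨v, Set.Subset.antisymm (fun m hm => ?_) ?_⟩
  · obtain ⟨X, -, ξ, rfl⟩ := hsub hm
    obtain ⟨c, rfl⟩ : X ∈ Aset k := hproj ▸ ⟨ξ, hm⟩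
    obtain ⟨α, rfl⟩ := hvec c ξ hm
    exact ⟨c, α, rfl⟩
  · rintro _ ⟨c, α, rfl⟩
    obtain ⟨ξ, hξ⟩ := hA c
    obtain ⟨β, rfl⟩ := hvec c ξ hξ
    have hsplit : Emat (oddPoly k c) (evenPoly k c *ᵥ v + α • e1 _) =
        Emat (oddPoly k c) (evenPoly k c *ᵥ v + β • e1 _) + (α - β) • Emat 0 (e1 _) := by
      rw [Emat_smul, Emat_add, smul_zero, add_zero]
      congr 1
      module
    rw [hsplit]
    exact hadd _ hξ _ (hsmul _ _ he1)

end Structure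

section Conjugation

variable {k : ℕ} {s t : ℝ}

noncomputable def scalingDiag (k : ℕ) (s t : ℝ) : Matrix (Fin (2 * k + 1)) (Fin (2 * k + 1)) ℝ :=
  diagonal fun i => t * s ^ k / s ^ i.val

def oddRescale (s : ℝ) (c : Fin k → ℝ) : Fin k → ℝ := fun j => s ^ (2 * j.val + 1) * c j

lemma scalingDiag_mul_scalingDiag_inv (hs : s ≠ 0) (ht : t ≠ 0) :
    scalingDiag k s t * scalingDiag k s⁻¹ t⁻¹ = 1 := by
  rw [scalingDiag, scalingDiag, diagonal_mul_diagonal, ← diagonal_one]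
  congr 1
  funext i
  simp only [inv_pow]
  field_simp

lemma scalingDiag_mul_shiftMat_pow (hs : s ≠ 0) (m : ℕ) :
    scalingDiag k s t * shiftMat (2 * k + 1) ^ m =
      s ^ m • (shiftMat (2 * k + 1) ^ m * scalingDiag k s t) := by
  ext i j
  rw [scalingDiag, diagonal_mul, Matrix.smul_apply, mul_diagonal, shiftMat_pow_apply, smul_eq_mul]
  split_ifs with h
  · rw [h, pow_add]
    field_simp
  · simp

lemma scalingDiag_mul_oddPoly (hs : s ≠ 0) (c : Fin k → ℝ) :
    scalingDiag k s t * oddPoly k c = oddPoly k (oddRescale s c) * scalingDiag k s t := by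
  simp_rw [oddPoly, oddRescale, Finset.mul_sum, Finset.sum_mul, mul_smul_comm,
    scalingDiag_mul_shiftMat_pow hs, smul_smul, smul_mul_assoc, mul_comm]

lemma scalingDiag_mul_evenPoly (hs : s ≠ 0) (c : Fin k → ℝ) :
    scalingDiag k s t * evenPoly k c =
      s⁻¹ • (evenPoly k (oddRescale s c) * scalingDiag k s t) := by
  simp_rw [evenPoly, oddRescale, Finset.mul_sum, Finset.sum_mul, Finset.smul_sum, mul_smul_comm,
    scalingDiag_mul_shiftMat_pow hs, smul_smul, smul_mul_assoc]
  refine Finset.sum_congr rfl fun j _ => ?_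
  rw [smul_smul, pow_succ]
  congr 1
  field_simp

lemma scalingDiag_mulVec_e1 :
    scalingDiag k s t *ᵥ e1 (2 * k + 1) = (t * s ^ k) • e1 (2 * k + 1) := by
  funext i
  simp only [scalingDiag, mulVec_diagonal, Pi.smul_apply, e1, smul_eq_mul]
  split_ifs with h
  · simp [h]
  · simp

lemma scalingDiag_mulVec_elast :
    scalingDiag k s t *ᵥ elast (2 * k + 1) = (t / s ^ k) • elast (2 * k + 1) := by
  funext i
  simp only [scalingDiag, mulVec_diagonal, Pi.smul_apply, elast, smul_eq_mul]
  split_ifs with h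
  · rw [show i.val = k + k by omega, pow_add]
    field_simp
  · simp

lemma scalingDiag_mul_Fmat_mul_transpose (hs : s ≠ 0) (htt : t * t = 1) (ε : ℝ) :
    scalingDiag k s t * Fmat k ε * (scalingDiag k s t)ᵀ = Fmat k ε := by
  ext i j
  rw [scalingDiag, diagonal_transpose, mul_diagonal, diagonal_mul]
  simp only [Fmat, of_apply]
  split_ifs with h
  · have hpow : s ^ i.val * s ^ j.val = s ^ k * s ^ k := by rw [← pow_add, ← pow_add, h, two_mul]
    have hd : t * s ^ k / s ^ i.val * (t * s ^ k / s ^ j.val) = 1 := by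
      rw [div_mul_div_comm, hpow, mul_mul_mul_comm, htt, one_mul, div_self (by positivity)]
    linear_combination (-1) ^ i.val * ε * hd
  · simp

lemma conj_Emat_twistedS (hs : s ≠ 0) (ht : t ≠ 0) (a v : Fin (2 * k + 1) → ℝ)
    (c : Fin k → ℝ) (α : ℝ) :
    Ggrp (scalingDiag k s t) a * Emat (oddPoly k c) (evenPoly k c *ᵥ v + α • e1 (2 * k + 1)) *
        (Ggrp (scalingDiag k s t) a)⁻¹ =
      Emat (oddPoly k (oddRescale s c))
        (evenPoly k (oddRescale s c) *ᵥ (s⁻¹ • (scalingDiag k s t *ᵥ v) - shiftMat _ *ᵥ a) +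
          (α * (t * s ^ k)) • e1 (2 * k + 1)) := by
  have hinv := scalingDiag_mul_scalingDiag_inv (k := k) hs ht
  rw [Ggrp_conj_Emat hinv, scalingDiag_mul_oddPoly hs, mul_assoc, hinv, mul_one,
    ← evenPoly_mul_shiftMat, mulVec_add, mulVec_smul, scalingDiag_mulVec_e1, mulVec_mulVec,
    scalingDiag_mul_evenPoly hs, smul_mulVec, ← mulVec_mulVec, ← mulVec_mulVec, mulVec_sub,
    mulVec_smul, smul_smul]
  congr 1
  module

lemma conj_image_twistedS (hs : s ≠ 0) (ht : t ≠ 0) (a v : Fin (2 * k + 1) → ℝ) :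
    (fun m => Ggrp (scalingDiag k s t) a * m * (Ggrp (scalingDiag k s t) a)⁻¹) '' twistedS k v =
      twistedS k (s⁻¹ • (scalingDiag k s t *ᵥ v) - shiftMat _ *ᵥ a) := by
  ext m
  constructor
  · rintro ⟨_, ⟨c, α, rfl⟩, rfl⟩
    exact ⟨_, _, conj_Emat_twistedS hs ht a v c α⟩
  · rintro ⟨c, α, rfl⟩
    refine ⟨_, ⟨oddRescale s⁻¹ c, α / (t * s ^ k), rfl⟩, ?_⟩
    have hc : oddRescale s (oddRescale s⁻¹ c) = c := by
      funext j
      simp only [oddRescale, inv_pow]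
      field_simp
    dsimp only
    rw [conj_Emat_twistedS hs ht, hc, div_mul_cancel₀ _ (by positivity)]

end Conjugation

section Classification

variable {k : ℕ} {ε : ℝ} {v : Fin (2 * k + 1) → ℝ}

lemma conjTo_twistedS_Sset (hv : v (Fin.last (2 * k)) = 0) :
    ConjTo (Fmat k ε) (twistedS k v) (Sset k) := by
  obtain ⟨a, ha⟩ := exists_shiftMat_mulVec_eq (w := -v) (by simp [hv])
  refine ⟨scalingDiag k 1 1, a, scalingDiag_mul_Fmat_mul_transpose one_ne_zero (one_mul 1) ε, ?_⟩
  rw [Sset_eq_twistedS, conj_image_twistedS one_ne_zero one_ne_zero, mulVec_zero, smul_zero,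
    zero_sub, ha, neg_neg]

lemma conjTo_twistedS_Mstar (hv : v (Fin.last (2 * k)) ≠ 0) :
    ConjTo (Fmat k ε) (twistedS k v) (Mstar k) := by
  set μ := v (Fin.last (2 * k))
  have hμ : 0 < |μ| := abs_pos.mpr hv
  obtain ⟨s, hs, hsk⟩ : ∃ s : ℝ, 0 < s ∧ s ^ (k + 1) = |μ|⁻¹ :=
    ⟨_, by positivity, Real.rpow_inv_natCast_pow (by positivity) k.succ_ne_zero⟩
  set t := μ / |μ|
  have htt : t * t = 1 := by
    rw [div_mul_div_comm, ← sq, ← sq, sq_abs, div_self (by positivity)]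
  have hscale : s⁻¹ • (scalingDiag k s t *ᵥ elast (2 * k + 1)) = μ • elast (2 * k + 1) := by
    rw [scalingDiag_mulVec_elast, smul_smul]
    congr 1
    rw [← div_eq_inv_mul, div_div, ← pow_succ, hsk, div_inv_eq_mul, div_mul_cancel₀ _ hμ.ne']
  obtain ⟨a, ha⟩ :=
    exists_shiftMat_mulVec_eq (w := μ • elast (2 * k + 1) - v) (by simp [elast, μ])
  refine ⟨scalingDiag k s t, a, scalingDiag_mul_Fmat_mul_transpose hs.ne' htt ε, ?_⟩
  rw [Mstar_eq_twistedS, conj_image_twistedS hs.ne' (left_ne_zero_of_mul_eq_one htt), hscale, ha,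
    sub_sub_cancel]

end Classification

/-- `M* ⊆ e(F)`, `M*` is a MASA of `e(F)`, and every MASA `M` of `e(F)` whose
`o(F)`-projection is `A` and whose translation part is `ℝ·E(0,e₁)` is `E(F)`-conjugate
to `S` or to `M*`. -/
theorem stmt1 (k : ℕ) (hk : 1 ≤ k) (ε : ℝ) (hε : ε = 1 ∨ ε = -1) :
    Mstar k ⊆ eK (Fmat k ε) ∧
    IsMASA (eK (Fmat k ε)) (Mstar k) ∧
    (∀ M : Set (Matrix (Fin (2 * k + 1 + 1)) (Fin (2 * k + 1 + 1)) ℝ),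
      IsMASA (eK (Fmat k ε)) M →
      {X | ∃ ξ : Fin (2 * k + 1) → ℝ, Emat X ξ ∈ M} = Aset k →
      M ∩ {m | ∃ a : Fin (2 * k + 1) → ℝ,
          m = Emat (0 : Matrix (Fin (2 * k + 1)) (Fin (2 * k + 1)) ℝ) a} =
        {m | ∃ c : ℝ,
          m = Emat (0 : Matrix (Fin (2 * k + 1)) (Fin (2 * k + 1)) ℝ)
            (c • e1 (2 * k + 1))} →
      (ConjTo (Fmat k ε) M (Sset k) ∨ ConjTo (Fmat k ε) M (Mstar k))) := by
  have hε0 : ε ≠ 0 := by rcases hε with rfl | rfl <;> norm_num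
  refine ⟨Mstar_subset_eK ε, Mstar_isMASA hε0, ?_⟩
  intro M hM hproj htr
  obtain ⟨v, rfl⟩ := eq_twistedS_of_isMASA hk hM hproj htr
  by_cases hv : v (Fin.last (2 * k)) = 0
  · exact Or.inl (conjTo_twistedS_Sset hv)
  · exact Or.inr (conjTo_twistedS_Mstar hv)
end

section
/- Let k₀ ≥ 3 and μ ≥ 1. Let K₀ ∈ ℝ^{μ×μ} be symmetric invertible, and let Q₁ = I_μ, Q₂, …, Q_{k₀} ∈ ℝ^{μ×μ} be pairwise commuting matrices satisfying Q_i K₀ = K₀ Q_iᵀ for all i. Let Λ ∈ ℝ^{μ×μ}, W ∈ ℝ^{μ×k₀}, and for each pair 1 ≤ i < k ≤ k₀ let ρ_{ik} ∈ ℝ^{1×μ} and P_{ik} ∈ ℝ^{1×k₀}. For α ∈ ℝ^{1×μ}, antisymmetric Y = (y_{ik}) ∈ ℝ^{k₀×k₀} and z ∈ ℝ^{1×k₀}, define the (2k₀+μ+1)×(2k₀+μ+1) matrix X_e(α,Y,z) with block rows (of sizes k₀, μ, k₀, 1): [[0, A, Y, zᵀ],[0, 0, −K₀Aᵀ, βᵀ],[0,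 0, 0, γᵀ],[0, 0, 0, 0]], where A ∈ ℝ^{k₀×μ} has i-th row αQ_i, β = αΛ + Σ_{i<k} y_{ik} ρ_{ik}, and γ = αW + Σ_{i<k} y_{ik} P_{ik}. If all the matrices X_e(α,Y,z) pairwise commute, then W = 0, ρ_{ik} = 0 and P_{ik} = 0 for all i < k, Λ = Λᵀ, and Q_j Λ K₀^{−1} = Λ K₀^{−1} Q_j for all j = 1,…,k₀. -/
open Matrix

/-- Index type with blocks of sizes `k₀, μ, k₀, 1`. -/
abbrev Idx3 (k₀ μ : ℕ) := (Fin k₀ ⊕ Fin μ) ⊕ (Fin k₀ ⊕ Unit)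

/-- The matrix `X_e(α, Y, z)` with block rows (sizes `k₀, μ, k₀, 1`)
`[[0, A, Y, zᵀ], [0, 0, -K₀Aᵀ, βᵀ], [0, 0, 0, γᵀ], [0, 0, 0, 0]]`, where the `i`-th
row of `A` is `α Qᵢ`, `β = αΛ + Σ_{i<k} y_{ik} ρ_{ik}` and `γ = αW + Σ_{i<k} y_{ik} P_{ik}`. -/
def Xe3 (k₀ μ : ℕ) (K₀ : Matrix (Fin μ) (Fin μ) ℝ)
    (Q : Fin k₀ → Matrix (Fin μ) (Fin μ) ℝ)
    (Λ : Matrix (Fin μ) (Fin μ) ℝ) (W : Matrix (Fin μ) (Fin k₀) ℝ)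
    (ρ : Fin k₀ → Fin k₀ → Fin μ → ℝ) (P : Fin k₀ → Fin k₀ → Fin k₀ → ℝ)
    (α : Fin μ → ℝ) (Y : Matrix (Fin k₀) (Fin k₀) ℝ) (z : Fin k₀ → ℝ) :
    Matrix (Idx3 k₀ μ) (Idx3 k₀ μ) ℝ :=
  let A : Matrix (Fin k₀) (Fin μ) ℝ := Matrix.of fun i j => ∑ l, α l * Q i l j
  let β : Fin μ → ℝ := fun j => (∑ l, α l * Λ l j) +
    ∑ i : Fin k₀, ∑ k : Fin k₀, if i < k then Y i k * ρ i k j else 0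
  let γ : Fin k₀ → ℝ := fun j => (∑ l, α l * W l j) +
    ∑ i : Fin k₀, ∑ k : Fin k₀, if i < k then Y i k * P i k j else 0
  Matrix.fromBlocks
    (Matrix.fromBlocks 0 A 0 0)
    (Matrix.fromBlocks Y (Matrix.of fun i _ => z i)
      (-(K₀ * Aᵀ)) (Matrix.of fun i _ => β i))
    0
    (Matrix.fromBlocks 0 (Matrix.of fun i _ => γ i) 0 0)

/-! The commutation relations are only needed at the entry in the first block row and the last
column, which equals `⟪α Qᵢ, β'⟫ + (Y γ')ᵢ` and hence is symmetric in `(α, Y)` and `(α', Y')`.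

With `Y = Y' = 0` this says `Qᵢ Λᵀ = Λ Qᵢᵀ`; since `Q₁ = 1`, `Λ` is symmetric, and conjugating
`Qᵢ K₀ = K₀ Qᵢᵀ` by `K₀⁻¹` moves `Qᵢ` past `Λ K₀⁻¹`.
With `α' = 0`, `Y = 0` and `Y' = E_{ab} - E_{ba}` it says `Qᵢ ρ_{ab} = δ_{ia} W_b - δ_{ib} W_a`:
the index `i = 1` kills `ρ_{ab}` for `a ≠ 1`, a third index then kills every column of `W`, and
then all `ρ_{ab}` vanish.
With `α = α' = 0`, the vectors `Γ_{ab} = γ(E_{ab} - E_{ba})` satisfy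
`(E_{ab} - E_{ba}) Γ_{cd} = (E_{cd} - E_{dc}) Γ_{ab}`, so `Γ_{ab}(y)` is symmetric in `(b, y)`
and antisymmetric in `(a, b)`, hence zero. -/

section SkewSingle

variable {ι R : Type*} [DecidableEq ι] [Ring R]

def skewSingle (a b : ι) : Matrix ι ι R := single a b 1 - single b a 1

lemma skewSingle_transpose (a b : ι) : (skewSingle a b : Matrix ι ι R)ᵀ = -skewSingle a b := by
  simp [skewSingle]

lemma skewSingle_swap (a b : ι) : (skewSingle b a : Matrix ι ι R) = -skewSingle a b := by
  simp [skewSingle]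

lemma skewSingle_mulVec_apply [Fintype ι] (a b i : ι) (v : ι → R) :
    (skewSingle a b *ᵥ v) i = (if i = a then v b else 0) - (if i = b then v a else 0) := by
  simp [skewSingle, sub_mulVec, single_mulVec, Function.update_apply]

end SkewSingle

section UpperCombination

variable {n : ℕ} {κ R : Type*}

def upperCombination [Semiring R] (Y : Matrix (Fin n) (Fin n) R) (f : Fin n → Fin n → κ → R) :
    κ → R :=
  fun j => ∑ i, ∑ k, if i < k then Y i k * f i k j else 0

lemma upperCombination_zero [Semiring R] (f : Fin n → Fin n → κ → R) :
    upperCombination 0 f = 0 := by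
  ext j
  simp [upperCombination]

lemma upperCombination_neg [Ring R] (Y : Matrix (Fin n) (Fin n) R) (f : Fin n → Fin n → κ → R) :
    upperCombination (-Y) f = -upperCombination Y f := by
  ext j
  simp [upperCombination, ← Finset.sum_neg_distrib, neg_ite]

lemma upperCombination_skewSingle [Ring R] {a b : Fin n} (hab : a < b)
    (f : Fin n → Fin n → κ → R) : upperCombination (skewSingle a b) f = f a b := by
  ext j
  have term (i k : Fin n) : (if i < k then skewSingle a b i k * f i k j else 0) =
      if i = a ∧ k = b then f a b j else 0 := by
    simp only [skewSingle, Matrix.sub_apply, single_apply]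
    split_ifs <;> grind
  simp [upperCombination, term, ite_and]

end UpperCombination

lemma eq_zero_of_mulVec_eq_ite_sub_ite {ι μ R : Type*} [LinearOrder ι] [Fintype μ]
    [DecidableEq μ] [Ring R] (hι : 3 ≤ ENat.card ι) {i₀ : ι} (hi₀ : ∀ i, i₀ ≤ i)
    (Q : ι → Matrix μ μ R) (hQ : Q i₀ = 1) (ρ : ι → ι → μ → R) (w : ι → μ → R)
    (h : ∀ a b i, a < b →
      Q i *ᵥ ρ a b = (if i = a then w b else 0) - (if i = b then w a else 0)) :
    w = 0 ∧ ∀ a b, a < b → ρ a b = 0 := by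
  have hρ_eq : ∀ a b, a < b → ρ a b = if a = i₀ then w b else 0 := fun a b hab => by
    have hb : i₀ ≠ b := ((hi₀ a).trans_lt hab).ne
    simpa [hQ, hb, eq_comm] using h a b i₀ hab
  have hρ : ∀ a b, a < b → a ≠ i₀ → ρ a b = 0 := fun a b hab ha => by
    simp [hρ_eq a b hab, ha]
  have hw : ∀ c, c ≠ i₀ → w c = 0 := fun c hc => by
    obtain ⟨m, hm₀, hmc⟩ := ENat.exists_ne_ne_of_three_le hι i₀ c
    rcases hmc.lt_or_gt with hlt | hgt
    · simpa [hρ m c hlt hm₀, hmc] using (h m c m hlt).symm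
    · simpa [hρ c m hgt hc, hmc] using (h c m m hgt).symm
  have hw₀ : w i₀ = 0 := by
    obtain ⟨b, hb, -⟩ := ENat.exists_ne_ne_of_three_le hι i₀ i₀
    have hlt : i₀ < b := (hi₀ b).lt_of_ne' hb
    have hρb : ρ i₀ b = 0 := by simp [hρ_eq i₀ b hlt, hw b hb]
    simpa [hρb, hb] using (h i₀ b b hlt).symm
  have hw_zero : w = 0 := funext fun c => by
    rcases eq_or_ne c i₀ with rfl | hc
    exacts [hw₀, hw c hc]
  exact ⟨hw_zero, fun a b hab => by simp [hρ_eq a b hab, hw_zero]⟩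

lemma eq_zero_of_skewSingle_mulVec_comm {ι R : Type*} [Fintype ι] [DecidableEq ι] [Ring R]
    [NoZeroDivisors R] [CharZero R] (hι : 3 ≤ ENat.card ι) (g : ι → ι → ι → R)
    (hg : ∀ a b y, g b a y = -g a b y)
    (h : ∀ a b c d, skewSingle a b *ᵥ g c d = skewSingle c d *ᵥ g a b) : g = 0 := by
  have sym : ∀ a b y, a ≠ b → a ≠ y → g a y b = g a b y := fun a b y hab hay => by
    simpa [skewSingle_mulVec_apply, hab, hay] using congrFun (h a b a y) a
  have diag : ∀ a b, g a b a = 0 := fun a b => by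
    obtain ⟨c, hca, hcb⟩ := ENat.exists_ne_ne_of_three_le hι a b
    simpa [skewSingle_mulVec_apply, hca, hcb] using (congrFun (h a b a c) c).symm
  ext a b y
  rcases eq_or_ne a b with rfl | hab
  · exact CharZero.eq_neg_self_iff.mp (hg a a y)
  rcases eq_or_ne y a with rfl | hya
  · exact diag y b
  rcases eq_or_ne y b with rfl | hyb
  · simpa [diag] using hg y a y
  refine CharZero.eq_neg_self_iff.mp ?_
  calc g a b y = g a y b := (sym a b y hab hya.symm).symm
    _ = -g y a b := hg y a b
    _ = -g y b a := by rw [sym y b a hyb hya]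
    _ = g b y a := (hg y b a).symm
    _ = g b a y := sym b a y hab.symm hyb.symm
    _ = -g a b y := hg a b y

lemma mul_mul_inv_comm_of_mul_eq_mul_transpose {n R : Type*} [Fintype n] [DecidableEq n]
    [CommRing R] {K Q Λ : Matrix n n R} (hK : IsUnit K) (hQK : Q * K = K * Qᵀ)
    (hQΛ : Q * Λ = Λ * Qᵀ) : Q * (Λ * K⁻¹) = Λ * K⁻¹ * Q := by
  have hdet := (isUnit_iff_isUnit_det K).mp hK
  have hQK' : Qᵀ * K⁻¹ = K⁻¹ * Q := by
    calc Qᵀ * K⁻¹ = K⁻¹ * (K * Qᵀ) * K⁻¹ := by rw [nonsing_inv_mul_cancel_left _ _ hdet]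
      _ = K⁻¹ * Q := by rw [← hQK, ← mul_assoc, mul_nonsing_inv_cancel_right _ _ hdet]
  rw [← mul_assoc, hQΛ, mul_assoc, hQK', mul_assoc]

def Xe3Commute {k₀ μ : ℕ} (K₀ : Matrix (Fin μ) (Fin μ) ℝ)
    (Q : Fin k₀ → Matrix (Fin μ) (Fin μ) ℝ)
    (Λ : Matrix (Fin μ) (Fin μ) ℝ) (W : Matrix (Fin μ) (Fin k₀) ℝ)
    (ρ : Fin k₀ → Fin k₀ → Fin μ → ℝ) (P : Fin k₀ → Fin k₀ → Fin k₀ → ℝ) : Prop :=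
  ∀ (α α' : Fin μ → ℝ) (Y Y' : Matrix (Fin k₀) (Fin k₀) ℝ) (z z' : Fin k₀ → ℝ),
    Yᵀ = -Y → Y'ᵀ = -Y' →
      Xe3 k₀ μ K₀ Q Λ W ρ P α Y z * Xe3 k₀ μ K₀ Q Λ W ρ P α' Y' z' =
        Xe3 k₀ μ K₀ Q Λ W ρ P α' Y' z' * Xe3 k₀ μ K₀ Q Λ W ρ P α Y z

section Xe3

variable {k₀ μ : ℕ} {K₀ : Matrix (Fin μ) (Fin μ) ℝ} {Q : Fin k₀ → Matrix (Fin μ) (Fin μ) ℝ}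
  {Λ : Matrix (Fin μ) (Fin μ) ℝ} {W : Matrix (Fin μ) (Fin k₀) ℝ}
  {ρ : Fin k₀ → Fin k₀ → Fin μ → ℝ} {P : Fin k₀ → Fin k₀ → Fin k₀ → ℝ}

lemma Xe3_mul_Xe3_apply_inl_inr (α α' : Fin μ → ℝ) (Y Y' : Matrix (Fin k₀) (Fin k₀) ℝ)
    (z z' : Fin k₀ → ℝ) (i : Fin k₀) :
    (Xe3 k₀ μ K₀ Q Λ W ρ P α Y z * Xe3 k₀ μ K₀ Q Λ W ρ P α' Y' z')
        (.inl (.inl i)) (.inr (.inr ())) =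
      (α ᵥ* Q i) ⬝ᵥ (α' ᵥ* Λ + upperCombination Y' ρ) +
        (Y *ᵥ (α' ᵥ* W + upperCombination Y' P)) i := by
  simp only [Xe3, mul_apply, Fintype.sum_sum_type, fromBlocks_apply₁₁, fromBlocks_apply₁₂,
    fromBlocks_apply₂₂, of_apply, Matrix.zero_apply, zero_mul, mul_zero, Finset.sum_const_zero,
    zero_add, add_zero]
  rfl

namespace Xe3Commute

lemma entry_symm (h : Xe3Commute K₀ Q Λ W ρ P) {α α' : Fin μ → ℝ}
    {Y Y' : Matrix (Fin k₀) (Fin k₀) ℝ} (hY : Yᵀ = -Y) (hY' : Y'ᵀ = -Y') (i : Fin k₀) :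
    (α ᵥ* Q i) ⬝ᵥ (α' ᵥ* Λ + upperCombination Y' ρ) +
        (Y *ᵥ (α' ᵥ* W + upperCombination Y' P)) i =
      (α' ᵥ* Q i) ⬝ᵥ (α ᵥ* Λ + upperCombination Y ρ) +
        (Y' *ᵥ (α ᵥ* W + upperCombination Y P)) i := by
  simpa only [Xe3_mul_Xe3_apply_inl_inr] using
    congrFun₂ (h α α' Y Y' 0 0 hY hY') (.inl (.inl i)) (.inr (.inr ()))

lemma mul_transpose_eq (h : Xe3Commute K₀ Q Λ W ρ P) (i : Fin k₀) :
    Q i * Λᵀ = Λ * (Q i)ᵀ := by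
  ext p q
  have := h.entry_symm (α := Pi.single p 1) (α' := Pi.single q 1) (Y := 0) (Y' := 0)
    (by simp) (by simp) i
  simpa [upperCombination_zero, mul_apply, dotProduct, mul_comm] using this

lemma mulVec_rho_eq (h : Xe3Commute K₀ Q Λ W ρ P) {a b : Fin k₀} (hab : a < b) (i : Fin k₀) :
    Q i *ᵥ ρ a b = (if i = a then Wᵀ b else 0) - (if i = b then Wᵀ a else 0) := by
  ext p
  have := h.entry_symm (α := Pi.single p 1) (α' := 0) (Y := 0) (by simp)
    (skewSingle_transpose a b) i
  simp only [single_vecMul, one_smul, zero_vecMul, upperCombination_skewSingle hab, zero_add,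
    zero_mulVec, Pi.zero_apply, add_zero, upperCombination_zero, zero_dotProduct,
    skewSingle_mulVec_apply, row_apply] at this
  simp only [Pi.sub_apply, apply_ite (fun v : Fin μ → ℝ => v p), transpose_apply, Pi.zero_apply]
  exact this

lemma skewSingle_mulVec_comm (h : Xe3Commute K₀ Q Λ W ρ P) (a b c d : Fin k₀) :
    skewSingle a b *ᵥ upperCombination (skewSingle c d) P =
      skewSingle c d *ᵥ upperCombination (skewSingle a b) P := by
  ext i
  simpa [upperCombination_zero] using
    h.entry_symm (α := 0) (α' := 0) (skewSingle_transpose a b) (skewSingle_transpose c d) i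

end Xe3Commute
end Xe3

/-- If all the matrices `X_e(α, Y, z)` (with `Y` antisymmetric) pairwise commute,
then `W = 0`, all `ρ_{ik}` and `P_{ik}` (`i < k`) vanish, `Λ` is symmetric, and
each `Q_j` commutes with `Λ K₀⁻¹`. -/
theorem stmt3 (k₀ μ : ℕ) (hk₀ : 3 ≤ k₀)
    (K₀ : Matrix (Fin μ) (Fin μ) ℝ) (hi : IsUnit K₀)
    (Q : Fin k₀ → Matrix (Fin μ) (Fin μ) ℝ)
    (hQ1 : Q ⟨0, by omega⟩ = 1)
    (hQK : ∀ i, Q i * K₀ = K₀ * (Q i)ᵀ)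
    (Λ : Matrix (Fin μ) (Fin μ) ℝ) (W : Matrix (Fin μ) (Fin k₀) ℝ)
    (ρ : Fin k₀ → Fin k₀ → Fin μ → ℝ) (P : Fin k₀ → Fin k₀ → Fin k₀ → ℝ)
    (hcomm : ∀ (α α' : Fin μ → ℝ) (Y Y' : Matrix (Fin k₀) (Fin k₀) ℝ)
      (z z' : Fin k₀ → ℝ), Yᵀ = -Y → Y'ᵀ = -Y' →
      Xe3 k₀ μ K₀ Q Λ W ρ P α Y z * Xe3 k₀ μ K₀ Q Λ W ρ P α' Y' z' =
        Xe3 k₀ μ K₀ Q Λ W ρ P α' Y' z' * Xe3 k₀ μ K₀ Q Λ W ρ P α Y z) :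
    W = 0 ∧
    (∀ i k : Fin k₀, i < k → ρ i k = 0 ∧ P i k = 0) ∧
    Λᵀ = Λ ∧
    (∀ j, Q j * (Λ * K₀⁻¹) = (Λ * K₀⁻¹) * Q j) := by
  have h : Xe3Commute K₀ Q Λ W ρ P := hcomm
  have hcard : 3 ≤ ENat.card (Fin k₀) := by simpa using hk₀
  have hΛ : Λᵀ = Λ := by simpa [hQ1] using h.mul_transpose_eq ⟨0, by omega⟩
  obtain ⟨hWt, hρ⟩ := eq_zero_of_mulVec_eq_ite_sub_ite hcard (fun i => Nat.zero_le i.val) Q hQ1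
    ρ Wᵀ fun a b i hab => h.mulVec_rho_eq hab i
  have hP : (fun a b => upperCombination (skewSingle a b) P) = 0 :=
    eq_zero_of_skewSingle_mulVec_comm hcard _
      (fun a b y => by rw [skewSingle_swap, upperCombination_neg, Pi.neg_apply])
      h.skewSingle_mulVec_comm
  refine ⟨transpose_eq_zero.mp hWt, fun a b hab => ⟨hρ a b hab, ?_⟩, hΛ, fun j => ?_⟩
  · simpa [upperCombination_skewSingle hab] using congrFun₂ hP a b
  · have hQΛ : Q j * Λ = Λ * (Q j)ᵀ := by simpa only [hΛ] using h.mul_transpose_eq j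
    exact mul_mul_inv_comm_of_mul_eq_mul_transpose hi (hQK j) hQΛ
end

section
/- Let μ ≥ 1, Q ∈ ℝ^{μ×μ} and ρ ∈ ℝ^{1×μ}, and suppose that for all row vectors α, α' ∈ ℝ^{1×μ} the identity [Qᵀ(αᵀα' − α'ᵀα) + (α'ᵀα − αᵀα')Q]ρᵀ = 0 holds. Then: (a) if μ ≥ 3 and Q is a single Jordan block (Q_{ii} = q for all i, Q_{i,i+1} = 1, all other entries 0, for some q ∈ ℝ), then ρ = 0; and (b) if Q is diagonal with trace 0 and Q ≠ 0, then ρ = 0. -/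
open Matrix

/-- The single Jordan block with eigenvalue `q`: `Q_{ii} = q`, `Q_{i,i+1} = 1`. -/
def jordanBlock (μ : ℕ) (q : ℝ) : Matrix (Fin μ) (Fin μ) ℝ :=
  Matrix.of fun i j => if i = j then q else if j.val = i.val + 1 then 1 else 0

/-!
Testing the hypothesis on `α = eᵢ`, `α' = eⱼ` and reading off the `k`-th entry gives
`Q i k ρ j + δ_{kj} (Qρ)_i = Q j k ρ i + δ_{ki} (Qρ)_j` for all `i, j, k`.
For a Jordan block, `(i, j, k) = (0, 1, 2)` gives `ρ 0 = 0`, and `k = j ∉ {i, i + 1}` gives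
`ρ (i + 1) = 0`. For a diagonal `Q`, `k = j ≠ i` gives `(Q i i - Q j j) ρ i = 0`, so a nonzero
`ρ i` forces `Q` to be scalar, hence zero since it is traceless.
-/

section JordanBlock

variable {μ : ℕ} {q : ℝ}

@[simp]
theorem jordanBlock_apply_self (i : Fin μ) : jordanBlock μ q i i = q := by
  simp [jordanBlock]

theorem jordanBlock_apply_of_val_eq_succ {i j : Fin μ} (h : j.val = i.val + 1) :
    jordanBlock μ q i j = 1 := by
  simp [jordanBlock, h, Fin.ext_iff]

theorem jordanBlock_apply_of_ne {i j : Fin μ} (hij : i ≠ j) (h : j.val ≠ i.val + 1) :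
    jordanBlock μ q i j = 0 := by
  simp [jordanBlock, hij, h]

theorem jordanBlock_mulVec_apply_of_val_eq_succ (ρ : Fin μ → ℝ) {i m : Fin μ}
    (hm : m.val = i.val + 1) : (jordanBlock μ q *ᵥ ρ) i = q * ρ i + ρ m := by
  have him : i ≠ m := by rw [Ne, Fin.ext_iff]; omega
  rw [mulVec, dotProduct, Fintype.sum_eq_add i m him, jordanBlock_apply_self,
    jordanBlock_apply_of_val_eq_succ hm, one_mul]
  rintro j ⟨hji, hjm⟩
  rw [jordanBlock_apply_of_ne (Ne.symm hji) (fun h => hjm (Fin.ext (by omega))), zero_mul]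

end JordanBlock

namespace Matrix

variable {R n : Type*} [CommRing R] [Fintype n] [DecidableEq n]

def SkewCommutatorCondition (Q : Matrix n n R) (ρ : n → R) : Prop :=
  ∀ α α' : n → R, (Qᵀ * (vecMulVec α α' - vecMulVec α' α) +
    (vecMulVec α' α - vecMulVec α α') * Q) *ᵥ ρ = 0

namespace SkewCommutatorCondition

variable {Q : Matrix n n R} {ρ : n → R}

theorem entry_eq (h : SkewCommutatorCondition Q ρ) (i j k : n) :
    Q i k * ρ j + (if k = j then (Q *ᵥ ρ) i else 0) =
      Q j k * ρ i + (if k = i then (Q *ᵥ ρ) j else 0) := by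
  have := congrFun (h (Pi.single i 1) (Pi.single j 1)) k
  rw [add_mulVec, ← mulVec_mulVec, ← mulVec_mulVec, sub_mulVec, sub_mulVec, vecMulVec_mulVec,
    vecMulVec_mulVec, vecMulVec_mulVec, vecMulVec_mulVec, mulVec_transpose] at this
  simp only [dotProduct, Pi.single_apply, ite_mul, one_mul, zero_mul, Finset.sum_ite_eq',
    Finset.mem_univ, ↓reduceIte, op_smul_eq_smul, sub_vecMul, Pi.add_apply, Pi.sub_apply, vecMul,
    Pi.smul_apply, smul_eq_mul, mul_ite, mul_one, mul_zero, Pi.zero_apply] at this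
  linear_combination this

theorem mul_eq_mul (h : SkewCommutatorCondition Q ρ) {i j k : n} (hki : k ≠ i) (hkj : k ≠ j) :
    Q i k * ρ j = Q j k * ρ i := by
  simpa [hki, hkj] using h.entry_eq i j k

theorem mulVec_apply (h : SkewCommutatorCondition Q ρ) {i j : n} (hij : i ≠ j) :
    Q i j * ρ j + (Q *ᵥ ρ) i = Q j j * ρ i := by
  simpa [hij.symm] using h.entry_eq i j j

theorem eq_zero_of_isDiag [IsDomain R] [CharZero R] (h : SkewCommutatorCondition Q ρ)
    (hdiag : Q.IsDiag) (htr : Q.trace = 0) (hQ : Q ≠ 0) : ρ = 0 := by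
  funext i
  by_contra hi
  have hconst : ∀ j, Q j j = Q i i := by
    intro j
    rcases eq_or_ne i j with rfl | hij
    · rfl
    have := h.mulVec_apply hij
    rw [hdiag hij, ← hdiag.diagonal_diag, mulVec_diagonal] at this
    exact (mul_right_cancel₀ hi (by simpa using this)).symm
  have hscalar : Q = diagonal fun _ => Q i i :=
    hdiag.diagonal_diag.symm.trans (congrArg diagonal (funext hconst))
  have hii : Q i i = 0 := by
    rw [hscalar, trace_diagonal, Finset.sum_const, smul_eq_zero] at htr
    exact htr.resolve_left (Finset.card_ne_zero.mpr ⟨i, Finset.mem_univ i⟩)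
  exact hQ (by rw [hscalar, hii, diagonal_zero])

theorem eq_zero_of_jordanBlock {μ : ℕ} (hμ : 3 ≤ μ) {q : ℝ} {ρ : Fin μ → ℝ}
    (h : SkewCommutatorCondition (jordanBlock μ q) ρ) : ρ = 0 := by
  funext m
  rcases Nat.eq_zero_or_pos m.val with hm | hm
  · have := h.mul_eq_mul (i := m) (j := ⟨1, by omega⟩) (k := ⟨2, by omega⟩)
      (by simp [Fin.ext_iff, hm]) (by simp [Fin.ext_iff])
    rwa [jordanBlock_apply_of_ne (by simp [Fin.ext_iff, hm]) (by simp [hm]),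
      jordanBlock_apply_of_val_eq_succ rfl, zero_mul, one_mul, eq_comm] at this
  · set i : Fin μ := ⟨m.val - 1, (Nat.sub_le _ _).trans_lt m.isLt⟩
    have hmi : m.val = i.val + 1 := by simp only [i]; omega
    obtain ⟨j, hji, hjm⟩ : ∃ j : Fin μ, j ≠ i ∧ j ≠ m :=
      Cardinal.exists_ne_ne_of_three_le (by simpa using hμ) i m
    have := h.mulVec_apply hji.symm
    rw [jordanBlock_apply_of_ne hji.symm (fun h => hjm (Fin.ext (by omega))),
      jordanBlock_mulVec_apply_of_val_eq_succ ρ hmi, jordanBlock_apply_self] at this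
    simpa using this

end SkewCommutatorCondition

end Matrix

theorem stmt6_general (μ : ℕ) (Q : Matrix (Fin μ) (Fin μ) ℝ) (ρ : Fin μ → ℝ)
    (h : ∀ α α' : Fin μ → ℝ,
      (Qᵀ * (vecMulVec α α' - vecMulVec α' α) +
        (vecMulVec α' α - vecMulVec α α') * Q).mulVec ρ = 0) :
    ((3 ≤ μ ∧ ∃ q : ℝ, Q = jordanBlock μ q) → ρ = 0) ∧
    ((Q.IsDiag ∧ Matrix.trace Q = 0 ∧ Q ≠ 0) → ρ = 0) :=
  ⟨fun ⟨hμ, _, hQ⟩ => SkewCommutatorCondition.eq_zero_of_jordanBlock hμ (hQ ▸ h),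
    fun ⟨hdiag, htr, hQ⟩ => SkewCommutatorCondition.eq_zero_of_isDiag h hdiag htr hQ⟩

/-- If `[Qᵀ(αᵀα' - α'ᵀα) + (α'ᵀα - αᵀα')Q] ρᵀ = 0` for all row vectors `α, α'`,
then (a) if `μ ≥ 3` and `Q` is a single Jordan block, `ρ = 0`; and
(b) if `Q` is diagonal, traceless and nonzero, `ρ = 0`. -/
theorem stmt6 (μ : ℕ) (hμ : 1 ≤ μ) (Q : Matrix (Fin μ) (Fin μ) ℝ) (ρ : Fin μ → ℝ)
    (h : ∀ α α' : Fin μ → ℝ,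
      (Qᵀ * (vecMulVec α α' - vecMulVec α' α) +
        (vecMulVec α' α - vecMulVec α α') * Q).mulVec ρ = 0) :
    ((3 ≤ μ ∧ ∃ q : ℝ, Q = jordanBlock μ q) → ρ = 0) ∧
    ((Q.IsDiag ∧ Matrix.trace Q = 0 ∧ Q ≠ 0) → ρ = 0) :=
  stmt6_general μ Q ρ h
end

section
/- Let k ≥ 0 and ε ∈ {1,−1}, and let F ∈ ℝ^{(2k+1)×(2k+1)} be the matrix with F_{i,2k+2−i} = (−1)^{i+1}ε and all other entries 0. Then F is symmetric and invertible, and there exists an invertible S ∈ ℝ^{(2k+1)×(2k+1)} such that SFSᵀ is diagonal with all diagonal entries equal to 1 or −1, where the number of entries equal to 1 is k+1 and the number equal to −1 is k if ε(−1)^k = 1, while the number of entries equal to 1 is k and the number equal to −1 is k+1 if ε(−1)^k = −1. -/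
open Matrix

namespace Stmt13

variable (k : ℕ) (ε : ℝ)

/-- the antidiagonal flip -/
def rr : Fin (2 * k + 1) → Fin (2 * k + 1) := fun i => ⟨2 * k - i.val, by omega⟩

noncomputable def s : Fin (2 * k + 1) → ℝ := fun i => (-1) ^ (i.val) * ε

noncomputable def p : Fin (2 * k + 1) → ℝ :=
  fun i => if i.val ≤ k then 1 else -(s k ε i) / 2

noncomputable def q : Fin (2 * k + 1) → ℝ :=
  fun i => if i.val < k then s k ε i / 2 else if i.val = k then 0 else 1

noncomputable def S : Matrix (Fin (2 * k + 1)) (Fin (2 * k + 1)) ℝ := Matrix.of fun i j =>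
  (if j = i then p k ε i else 0) + (if j = rr k i then q k ε i else 0)

noncomputable def d : Fin (2 * k + 1) → ℝ :=
  fun i => if i.val < k then 1 else if i.val = k then (-1) ^ k * ε else -1

variable {k ε}

lemma rr_val (i : Fin (2 * k + 1)) : (rr k i).val = 2 * k - i.val := rfl

lemma rr_rr (i : Fin (2 * k + 1)) : rr k (rr k i) = i := by
  have := i.isLt; ext; simp only [rr_val]; omega

lemma eq_rr_iff (i j : Fin (2 * k + 1)) : j = rr k i ↔ i = rr k j := by
  constructor <;> (rintro rfl; exact (rr_rr _).symm)

lemma rr_inj (i j : Fin (2 * k + 1)) : rr k i = rr k j ↔ i = j := by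
  constructor
  · intro h; have := congrArg (rr k) h; rwa [rr_rr, rr_rr] at this
  · rintro rfl; rfl

lemma neg_one_pow_sub (i : Fin (2 * k + 1)) :
    ((-1 : ℝ)) ^ (2 * k - i.val) = (-1) ^ i.val := by
  have hi := i.isLt
  have h1 : ((-1 : ℝ)) ^ (i.val) * (-1) ^ (i.val) = 1 := by
    rw [← mul_pow]; norm_num
  have h3 : (2 * k - i.val) + i.val = 2 * k := by omega
  have hmul : ((-1 : ℝ)) ^ (2 * k - i.val) * (-1) ^ i.val = 1 := by
    rw [← pow_add, h3, pow_mul]; norm_num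
  calc ((-1 : ℝ)) ^ (2 * k - i.val)
      = (-1) ^ (2 * k - i.val) * ((-1) ^ i.val * (-1) ^ i.val) := by rw [h1, mul_one]
    _ = ((-1) ^ (2 * k - i.val) * (-1) ^ i.val) * (-1) ^ i.val := by ring
    _ = (-1) ^ i.val := by rw [hmul, one_mul]

lemma s_rr (i : Fin (2 * k + 1)) : s k ε (rr k i) = s k ε i := by
  simp only [s, rr_val, neg_one_pow_sub]

lemma s_sq (hε : ε = 1 ∨ ε = -1) (i : Fin (2 * k + 1)) : s k ε i * s k ε i = 1 := by
  have h1 : ((-1 : ℝ)) ^ (i.val) * (-1) ^ (i.val) = 1 := by rw [← mul_pow]; norm_num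
  have h2 : ε * ε = 1 := by rcases hε with rfl | rfl <;> norm_num
  calc s k ε i * s k ε i = ((-1 : ℝ)) ^ (i.val) * (-1) ^ (i.val) * (ε * ε) := by
        simp only [s]; ring
    _ = 1 := by rw [h1, h2, mul_one]

lemma Fmat_apply (i j : Fin (2 * k + 1)) :
    Fmat k ε i j = if j = rr k i then s k ε i else 0 := by
  have hcond : (i.val + j.val = 2 * k) ↔ j = rr k i := by
    rw [Fin.ext_iff, rr_val]
    have := i.isLt; have := j.isLt; omega
  simp only [Fmat, Matrix.of_apply, s]
  rw [if_congr hcond rfl rfl]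

lemma Fmat_transpose : (Fmat k ε)ᵀ = Fmat k ε := by
  ext i j
  rw [transpose_apply, Fmat_apply, Fmat_apply]
  by_cases h : j = rr k i
  · rw [if_pos ((eq_rr_iff i j).mp h), if_pos h, h, s_rr]
  · rw [if_neg (fun hc => h ((eq_rr_iff j i).mp hc)), if_neg h]

lemma Fmat_mul_Fmat (hε : ε = 1 ∨ ε = -1) : Fmat k ε * Fmat k ε = 1 := by
  ext i j
  rw [mul_apply]
  simp only [Fmat_apply]
  have step : ∀ l, (if l = rr k i then s k ε i else 0) * (if j = rr k l then s k ε l else 0)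
      = if l = rr k i then (s k ε i * if j = rr k l then s k ε l else 0) else 0 := by
    intro l; split_ifs <;> simp_all
  simp only [step]
  rw [Finset.sum_ite_eq' Finset.univ (rr k i)]
  simp only [Finset.mem_univ, if_true, rr_rr, s_rr]
  rw [Matrix.one_apply]
  by_cases h : i = j
  · subst h; rw [if_pos rfl, if_pos rfl, s_sq hε]
  · rw [if_neg (fun hc => h hc.symm), if_neg h, mul_zero]

lemma S_apply (i j : Fin (2 * k + 1)) :
    S k ε i j = (if j = i then p k ε i else 0) + (if j = rr k i then q k ε i else 0) := rfl

lemma sum_ite_ite (a c : Fin (2 * k + 1)) (x z : ℝ) :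
    (∑ l : Fin (2 * k + 1), (if l = a then x else 0) * (if l = c then z else 0))
      = if a = c then x * z else 0 := by
  have step : ∀ l : Fin (2 * k + 1), (if l = a then x else 0) * (if l = c then z else 0)
      = if l = a then (if a = c then x * z else 0) else 0 := by
    intro l; split_ifs <;> simp_all
  simp only [step]
  rw [Finset.sum_ite_eq' Finset.univ a]
  simp

lemma SF_apply (i l : Fin (2 * k + 1)) :
    (S k ε * Fmat k ε) i l =
      (if l = rr k i then p k ε i * s k ε i else 0)
      + (if l = i then q k ε i * s k ε i else 0) := by
  rw [mul_apply]
  simp only [S_apply, Fmat_apply]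
  have step : ∀ t, ((if t = i then p k ε i else 0) + (if t = rr k i then q k ε i else 0)) *
        (if l = rr k t then s k ε t else 0)
      = if t = rr k l then
          ((if t = i then p k ε i else 0) + (if t = rr k i then q k ε i else 0)) * s k ε t
        else 0 := by
    intro t
    by_cases h : l = rr k t
    · rw [if_pos h, if_pos ((eq_rr_iff t l).mp h)]
    · rw [if_neg h, if_neg (fun hc => h ((eq_rr_iff l t).mp hc)), mul_zero]
  simp only [step]
  rw [Finset.sum_ite_eq' Finset.univ (rr k l)]
  simp only [Finset.mem_univ, if_true, s_rr]
  have c1 : (rr k l = i) ↔ (l = rr k i) := by rw [eq_comm, eq_rr_iff]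
  have c2 : (rr k l = rr k i) ↔ (l = i) := rr_inj l i
  rw [add_mul, if_congr c1 rfl rfl, if_congr c2 rfl rfl, ite_mul, zero_mul, ite_mul, zero_mul]
  congr 1
  · split_ifs with h
    · rw [h, s_rr]
    · rfl
  · split_ifs with h
    · rw [h]
    · rfl

lemma SFS_apply (i j : Fin (2 * k + 1)) :
    (S k ε * Fmat k ε * (S k ε)ᵀ) i j =
      (if rr k i = j then p k ε i * s k ε i * p k ε j else 0)
      + (if rr k i = rr k j then p k ε i * s k ε i * q k ε j else 0)
      + (if i = j then q k ε i * s k ε i * p k ε j else 0)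
      + (if i = rr k j then q k ε i * s k ε i * q k ε j else 0) := by
  rw [mul_apply]
  simp only [transpose_apply, SF_apply, S_apply]
  have expand : ∀ l : Fin (2 * k + 1),
      ((if l = rr k i then p k ε i * s k ε i else 0) + (if l = i then q k ε i * s k ε i else 0)) *
        ((if l = j then p k ε j else 0) + (if l = rr k j then q k ε j else 0))
      = (if l = rr k i then p k ε i * s k ε i else 0) * (if l = j then p k ε j else 0)
        + ((if l = rr k i then p k ε i * s k ε i else 0) * (if l = rr k j then q k ε j else 0)
        + ((if l = i then q k ε i * s k ε i else 0) * (if l = j then p k ε j else 0)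
        + (if l = i then q k ε i * s k ε i else 0) * (if l = rr k j then q k ε j else 0))) := by
    intro l; ring
  simp only [expand]
  rw [Finset.sum_add_distrib, Finset.sum_add_distrib, Finset.sum_add_distrib,
    sum_ite_ite, sum_ite_ite, sum_ite_ite, sum_ite_ite]
  ring

lemma main_eq (hε : ε = 1 ∨ ε = -1) :
    S k ε * Fmat k ε * (S k ε)ᵀ = Matrix.diagonal (d k ε) := by
  ext i j
  rw [SFS_apply, Matrix.diagonal_apply]
  have hi := i.isLt
  by_cases hij : i = j
  · subst hij
    rw [if_pos rfl]
    by_cases hk : i.val = k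
    · have hri : rr k i = i := by ext; rw [rr_val]; omega
      rw [if_pos hri, if_pos rfl, if_pos rfl, if_pos ((eq_rr_iff i i).mpr hri.symm)]
      have hp : p k ε i = 1 := by simp [p, hk.le, hk]
      have hq : q k ε i = 0 := by simp [q, hk]
      have hd : d k ε i = (-1) ^ k * ε := by simp [d, hk]
      have hs : s k ε i = (-1) ^ k * ε := by simp [s, hk]
      rw [hp, hq, hd, hs]; ring
    · have hri : rr k i ≠ i := by
        intro hc; apply hk
        have := congrArg Fin.val hc; rw [rr_val] at this; omega
      rw [if_neg hri, if_pos rfl, if_pos rfl,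
        if_neg (fun hc => hri ((eq_rr_iff i i).mp hc).symm)]
      rcases Nat.lt_or_ge i.val k with h | h
      · have hd : d k ε i = 1 := by simp [d, h]
        have hp : p k ε i = 1 := by simp [p, h.le]
        have hq : q k ε i = s k ε i / 2 := by simp [q, h]
        rw [hd, hp, hq]
        linear_combination s_sq hε i
      · have hgt : k < i.val := lt_of_le_of_ne h (fun hc => hk hc.symm)
        have hd : d k ε i = -1 := by
          simp only [d]; rw [if_neg (by omega), if_neg (by omega)]
        have hp : p k ε i = -(s k ε i) / 2 := by
          simp only [p]; rw [if_neg (by omega)]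
        have hq : q k ε i = 1 := by
          simp only [q]; rw [if_neg (by omega), if_neg (by omega)]
        rw [hd, hp, hq]
        linear_combination -(s_sq hε i)
  · rw [if_neg hij, if_neg hij,
      if_neg (fun hc : rr k i = rr k j => hij ((rr_inj i j).mp hc))]
    by_cases h : rr k i = j
    · rw [if_pos h, if_pos ((eq_rr_iff i j).mp h.symm)]
      subst h
      have hk : i.val ≠ k := by
        intro hc; apply hij; ext; rw [rr_val]; omega
      have hs := s_rr (k := k) (ε := ε) i
      have hv : (rr k i).val = 2 * k - i.val := rfl
      rcases Nat.lt_or_ge i.val k with hlt | hge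
      · have hp1 : p k ε i = 1 := by simp [p, hlt.le]
        have hp2 : p k ε (rr k i) = -(s k ε i) / 2 := by
          simp only [p]; rw [if_neg (by rw [hv]; omega), hs]
        have hq1 : q k ε i = s k ε i / 2 := by simp [q, hlt]
        have hq2 : q k ε (rr k i) = 1 := by
          simp only [q]; rw [if_neg (by rw [hv]; omega), if_neg (by rw [hv]; omega)]
        rw [hp1, hp2, hq1, hq2]; ring
      · have hgt : k < i.val := lt_of_le_of_ne hge (fun hc => hk hc.symm)
        have hp1 : p k ε i = -(s k ε i) / 2 := by simp only [p]; rw [if_neg (by omega)]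
        have hp2 : p k ε (rr k i) = 1 := by
          simp only [p]; rw [if_pos (by rw [hv]; omega)]
        have hq1 : q k ε i = 1 := by
          simp only [q]; rw [if_neg (by omega), if_neg (by omega)]
        have hq2 : q k ε (rr k i) = s k ε i / 2 := by
          simp only [q]; rw [if_pos (by rw [hv]; omega), hs]
        rw [hp1, hp2, hq1, hq2]; ring
    · rw [if_neg h, if_neg (fun hc : i = rr k j => h (((eq_rr_iff j i).mp hc).symm))]
      norm_num

lemma d_pm (hε : ε = 1 ∨ ε = -1) (i : Fin (2 * k + 1)) : d k ε i = 1 ∨ d k ε i = -1 := by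
  simp only [d]
  split_ifs
  · left; rfl
  · rcases hε with rfl | rfl <;> rcases Nat.even_or_odd k with h | h <;>
      simp [h.neg_one_pow]
  · right; rfl

lemma diag_sq (hε : ε = 1 ∨ ε = -1) :
    Matrix.diagonal (d k ε) * Matrix.diagonal (d k ε) = 1 := by
  rw [diagonal_mul_diagonal]
  have : (fun i => d k ε i * d k ε i) = fun _ => (1 : ℝ) := by
    funext i
    rcases d_pm hε i with h | h <;> rw [h] <;> norm_num
  rw [this]
  exact Matrix.diagonal_one

lemma isUnit_S (hε : ε = 1 ∨ ε = -1) : IsUnit (S k ε) := by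
  have h : S k ε * (Fmat k ε * (S k ε)ᵀ * Matrix.diagonal (d k ε)) = 1 := by
    rw [← Matrix.mul_assoc, ← Matrix.mul_assoc, main_eq hε, diag_sq hε]
  letI := invertibleOfRightInverse _ _ h
  exact isUnit_of_invertible _

def eLT (n m : ℕ) : {i : Fin n // i.val < m} ≃ Fin (min m n) where
  toFun x := ⟨x.1.val, by have := x.1.isLt; have := x.2; omega⟩
  invFun y := ⟨⟨y.val, by have := y.isLt; omega⟩, by show y.val < m; have := y.isLt; omega⟩
  left_inv x := rfl
  right_inv y := rfl

def eGE (n m : ℕ) : {i : Fin n // m ≤ i.val} ≃ Fin (n - m) where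
  toFun x := ⟨x.1.val - m, by have := x.1.isLt; have := x.2; omega⟩
  invFun y := ⟨⟨y.val + m, by have := y.isLt; omega⟩, by show m ≤ y.val + m; omega⟩
  left_inv x := by
    have := x.2
    apply Subtype.ext; apply Fin.ext; show x.1.val - m + m = x.1.val; omega
  right_inv y := by apply Fin.ext; show y.val + m - m = y.val; omega

lemma card_lt (n m : ℕ) : Nat.card {i : Fin n // i.val < m} = min m n := by
  rw [Nat.card_congr (eLT n m)]; simp

lemma card_ge (n m : ℕ) : Nat.card {i : Fin n // m ≤ i.val} = n - m := by
  rw [Nat.card_congr (eGE n m)]; simp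

lemma counts_pos (h1 : (-1 : ℝ) ^ k * ε = 1) :
    Nat.card {i // d k ε i = 1} = k + 1 ∧ Nat.card {i // d k ε i = -1} = k := by
  have hd1 : ∀ i : Fin (2 * k + 1), d k ε i = 1 ↔ i.val < k + 1 := by
    intro i
    simp only [d]
    rcases lt_trichotomy i.val k with h | h | h
    · rw [if_pos h]
      constructor
      · intro _; omega
      · intro _; rfl
    · rw [if_neg (by omega), if_pos h, h1]
      constructor
      · intro _; omega
      · intro _; rfl
    · rw [if_neg (by omega), if_neg (by omega)]
      constructor
      · intro hc; norm_num at hc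
      · intro hc; omega
  have hd2 : ∀ i : Fin (2 * k + 1), d k ε i = -1 ↔ k + 1 ≤ i.val := by
    intro i
    simp only [d]
    rcases lt_trichotomy i.val k with h | h | h
    · rw [if_pos h]
      constructor
      · intro hc; norm_num at hc
      · intro hc; omega
    · rw [if_neg (by omega), if_pos h, h1]
      constructor
      · intro hc; norm_num at hc
      · intro hc; omega
    · rw [if_neg (by omega), if_neg (by omega)]
      constructor
      · intro _; omega
      · intro _; rfl
  constructor
  · rw [Nat.card_congr (Equiv.subtypeEquivRight hd1), card_lt]; omega
  · rw [Nat.card_congr (Equiv.subtypeEquivRight hd2), card_ge]; omega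

lemma counts_neg (h1 : (-1 : ℝ) ^ k * ε = -1) :
    Nat.card {i // d k ε i = 1} = k ∧ Nat.card {i // d k ε i = -1} = k + 1 := by
  have hd1 : ∀ i : Fin (2 * k + 1), d k ε i = 1 ↔ i.val < k := by
    intro i
    simp only [d]
    rcases lt_trichotomy i.val k with h | h | h
    · rw [if_pos h]
      constructor
      · intro _; omega
      · intro _; rfl
    · rw [if_neg (by omega), if_pos h, h1]
      constructor
      · intro hc; norm_num at hc
      · intro hc; omega
    · rw [if_neg (by omega), if_neg (by omega)]
      constructor
      · intro hc; norm_num at hc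
      · intro hc; omega
  have hd2 : ∀ i : Fin (2 * k + 1), d k ε i = -1 ↔ k ≤ i.val := by
    intro i
    simp only [d]
    rcases lt_trichotomy i.val k with h | h | h
    · rw [if_pos h]
      constructor
      · intro hc; norm_num at hc
      · intro hc; omega
    · rw [if_neg (by omega), if_pos h, h1]
      constructor
      · intro _; omega
      · intro _; rfl
    · rw [if_neg (by omega), if_neg (by omega)]
      constructor
      · intro _; omega
      · intro _; rfl
  constructor
  · rw [Nat.card_congr (Equiv.subtypeEquivRight hd1), card_lt]; omega
  · rw [Nat.card_congr (Equiv.subtypeEquivRight hd2), card_ge]; omega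

end Stmt13

/-- `F` is symmetric, invertible, and congruent to a `±1` diagonal matrix whose
signature is `(k+1, k)` if `ε(-1)^k = 1` and `(k, k+1)` if `ε(-1)^k = -1`. -/
theorem stmt13 (k : ℕ) (ε : ℝ) (hε : ε = 1 ∨ ε = -1) :
    (Fmat k ε)ᵀ = Fmat k ε ∧ IsUnit (Fmat k ε) ∧
    ∃ S : Matrix (Fin (2 * k + 1)) (Fin (2 * k + 1)) ℝ, IsUnit S ∧
      ∃ d : Fin (2 * k + 1) → ℝ,
        S * Fmat k ε * Sᵀ = Matrix.diagonal d ∧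
        (∀ i, d i = 1 ∨ d i = -1) ∧
        (ε * (-1) ^ k = 1 →
          Nat.card {i // d i = 1} = k + 1 ∧ Nat.card {i // d i = -1} = k) ∧
        (ε * (-1) ^ k = -1 →
          Nat.card {i // d i = 1} = k ∧ Nat.card {i // d i = -1} = k + 1) := by
  refine ⟨Stmt13.Fmat_transpose, ?_, Stmt13.S k ε, Stmt13.isUnit_S hε, Stmt13.d k ε,
    Stmt13.main_eq hε, Stmt13.d_pm hε, ?_, ?_⟩
  · letI := invertibleOfRightInverse (Fmat k ε) (Fmat k ε) (Stmt13.Fmat_mul_Fmat hε)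
    exact isUnit_of_invertible _
  · intro h; exact Stmt13.counts_pos (by rw [mul_comm]; exact h)
  · intro h; exact Stmt13.counts_neg (by rw [mul_comm]; exact h)
end

section
/- Let K ∈ ℝ^{3×3} be the matrix K = E_{1,3} + E_{3,1} + E_{2,2}. For a, z ∈ ℝ let X_e(a,z) be the 4×4 matrix a(E_{1,2} − E_{2,3} + E_{3,4}) + z E_{1,4}. Then M = {X_e(a,z) : a, z ∈ ℝ} is a maximal abelian subalgebra of the Lie algebra e(K). -/
/-!
For `K = E₁₃ + E₃₁ + E₂₂` the algebra `o(K)` consists of the matrices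
`[[p, q, 0], [r, 0, -q], [0, -r, -p]]`. The set `M` is abelian because
`X_e(a, z) X_e(b, w) = -ab (E₁₃ + E₂₄)` is symmetric in the two factors. It is maximal because
for `Y = E(X, α) ∈ e(K)` the single relation `Y X_e(1, 0) = X_e(1, 0) Y` already forces
`p = r = 0`, `α₂ = 0` and `α₃ = q`, that is `Y = X_e(q, α₁)`.
-/

open Matrix

local notation "K₃" => (!![0, 0, 1; 0, 1, 0; 1, 0, 0] : Matrix (Fin 3) (Fin 3) ℝ)

def xe (a z : ℝ) : Matrix (Fin 4) (Fin 4) ℝ :=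
  !![0, a, 0, z;
     0, 0, -a, 0;
     0, 0, 0, a;
     0, 0, 0, 0]

lemma mem_oK_K₃_iff {X : Matrix (Fin 3) (Fin 3) ℝ} :
    X ∈ oK K₃ ↔ ∃ p q r : ℝ, X = !![p, q, 0; r, 0, -q; 0, -r, -p] := by
  constructor
  · intro hX
    have entry (i j : Fin 3) := congrFun₂ (show X * K₃ + K₃ * Xᵀ = 0 from hX) i j
    refine ⟨X 0 0, X 0 1, X 1 0, ?_⟩
    have e00 := entry 0 0
    have e01 := entry 0 1
    have e02 := entry 0 2
    have e11 := entry 1 1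
    have e12 := entry 1 2
    have e22 := entry 2 2
    simp only [cons_mul, Nat.succ_eq_add_one, Nat.reduceAdd, empty_mul, Equiv.symm_apply_apply,
      Fin.isValue, Matrix.add_apply, mul_apply, of_apply, cons_val', cons_val_zero,
      cons_val_fin_one, Fin.sum_univ_three, mul_zero, cons_val_one, add_zero, cons_val, mul_one,
      zero_add, vecMul, dotProduct, transpose_apply, zero_mul, one_mul, Matrix.zero_apply,
      add_self_eq_zero] at e00 e01 e02 e11 e12 e22
    ext i j
    fin_cases i <;> fin_cases j <;> simp <;> linarith
  · rintro ⟨p, q, r, rfl⟩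
    show _ * _ + _ * _ = 0
    ext i j
    fin_cases i <;> fin_cases j <;> simp [vecMul, dotProduct, Fin.sum_univ_three]

lemma Emat_fin_three (X : Matrix (Fin 3) (Fin 3) ℝ) (v : Fin 3 → ℝ) :
    Emat X v = !![X 0 0, X 0 1, X 0 2, v 0;
                  X 1 0, X 1 1, X 1 2, v 1;
                  X 2 0, X 2 1, X 2 2, v 2;
                  0, 0, 0, 0] := by
  ext i j
  fin_cases i <;> fin_cases j <;> rfl

lemma xe_eq_Emat (a z : ℝ) : xe a z = Emat !![0, a, 0; 0, 0, -a; 0, 0, 0] ![z, 0, a] := by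
  rw [Emat_fin_three]
  ext i j
  fin_cases i <;> fin_cases j <;> simp [xe]

lemma xe_mem_eK (a z : ℝ) : xe a z ∈ eK K₃ :=
  ⟨_, mem_oK_K₃_iff.2 ⟨0, a, 0, by simp⟩, _, xe_eq_Emat a z⟩

lemma xe_mul_xe (a z b w : ℝ) :
    xe a z * xe b w = !![0, 0, -(a * b), 0;
                         0, 0, 0, -(a * b);
                         0, 0, 0, 0;
                         0, 0, 0, 0] := by
  ext i j
  fin_cases i <;> fin_cases j <;> simp [xe, mul_apply, Fin.sum_univ_four]

lemma xe_zero : xe 0 0 = 0 := by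
  ext i j
  fin_cases i <;> fin_cases j <;> simp [xe]

lemma xe_add (a z b w : ℝ) : xe a z + xe b w = xe (a + b) (z + w) := by
  ext i j
  fin_cases i <;> fin_cases j <;> simp [xe, add_comm]

lemma xe_smul (c a z : ℝ) : c • xe a z = xe (c * a) (c * z) := by
  ext i j
  fin_cases i <;> fin_cases j <;> simp [xe]

lemma Emat_eq_xe_of_commute {p q r : ℝ} {v : Fin 3 → ℝ}
    (h : Emat !![p, q, 0; r, 0, -q; 0, -r, -p] v * xe 1 0 =
      xe 1 0 * Emat !![p, q, 0; r, 0, -q; 0, -r, -p] v) :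
    Emat !![p, q, 0; r, 0, -q; 0, -r, -p] v = xe q (v 0) := by
  rw [Emat_fin_three] at h ⊢
  have entry (i j : Fin 4) := congrFun₂ h i j
  have e00 := entry 0 0
  have e01 := entry 0 1
  have e03 := entry 0 3
  have e13 := entry 1 3
  simp only [Nat.reduceAdd, Fin.isValue, of_apply, cons_val', cons_val_zero, cons_val_fin_one,
    cons_val_one, cons_val, xe, mul_apply, Fin.sum_univ_four, mul_zero, add_zero, zero_mul,
    one_mul, zero_add, mul_one, mul_neg, neg_zero, neg_mul, neg_inj] at e00 e01 e03 e13
  ext i j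
  fin_cases i <;> fin_cases j <;> simp [xe] <;> linarith

/-- `M = {X_e(a,z)}` with `X_e(a,z) = a(E₁₂ - E₂₃ + E₃₄) + z E₁₄` is a maximal
abelian subalgebra of `e(K)`, `K = E₁₃ + E₃₁ + E₂₂`. -/
theorem stmt19 :
    IsMASA (eK (!![0, 0, 1; 0, 1, 0; 1, 0, 0] : Matrix (Fin 3) (Fin 3) ℝ))
      {m | ∃ a z : ℝ,
        m = !![0, a, 0, z;
               0, 0, -a, 0;
               0, 0, 0, a;
               0, 0, 0, 0]} := by
  show IsMASA (eK K₃) {m | ∃ a z, m = xe a z}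
  refine ⟨?_, ?_, ⟨0, 0, xe_zero.symm⟩, ?_, ?_, ?_⟩
  · rintro _ ⟨a, z, rfl⟩
    exact xe_mem_eK a z
  · rintro _ ⟨a, z, rfl⟩ _ ⟨b, w, rfl⟩
    rw [xe_mul_xe, xe_mul_xe, mul_comm a b]
  · rintro _ ⟨a, z, rfl⟩ _ ⟨b, w, rfl⟩
    exact ⟨a + b, z + w, xe_add a z b w⟩
  · rintro c _ ⟨a, z, rfl⟩
    exact ⟨c * a, c * z, xe_smul c a z⟩
  · rintro _ ⟨X, hX, v, rfl⟩ hcomm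
    obtain ⟨p, q, r, rfl⟩ := mem_oK_K₃_iff.1 hX
    exact ⟨q, v 0, Emat_eq_xe_of_commute (hcomm _ ⟨1, 0, rfl⟩)⟩
end
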